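/- arXiv:2507.17781 — 8 statements merged into one kernel-verified Lean document; each statement's English description precedes it below -/
import Mathlib

section
/- There exist no differentiable functions α, β, γ, μ, ν : [0,∞) → ℝ forming an admissible solution of System A on all of [0,∞). (Equivalently: every homogeneous Ricci flow on SO(3)⋉ℝ³/SO(2), written in these coordinates, has a finite-time extinction.) -/
/-!
Write `D = βγ - τ`, `k = ν²/D` and `L = log (β/α)`. The system gives `D' = 2α - 4β + 4αk`,
`k' ≤ -2αk/D` and `L' = 3(α² - β²)/(αD) + 4αk/D`. Hence `k` decreases, `L` stays bounded, and
the monotone quantities `log α + 2L/3` (nonincreasing) and `log α + 2(L - k)/3` (nondecreasing)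
trap `α` between two positive constants, so `D` grows at most linearly. As `∫ dt / (D(0) + qt)`
diverges, `k` must eventually drop below every `ε > 0` and `β/α` must eventually exceed every
`c < 1`. Once `k ≤ 1/8` and `β ≥ 3α/4`, `D' ≤ -α/2` is bounded away from zero, so `D` reaches `0`
in finite time, contradicting admissibility.
-/

/-- **System A**: the homogeneous Ricci flow equations on `SO(3) ⋉ ℝ³ / SO(2)` for
real-valued differentiable functions `α β γ μ ν` on a set `s`, with `τ := μ² + ν²`,
together with the admissibility conditions `α > 0`, `β > 0`, `γ > 0`, `βγ > τ`. -/
def IsAdmissibleSolutionA (α β γ μ ν : ℝ → ℝ) (s : Set ℝ) : Prop :=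
  ∀ t ∈ s,
    0 < α t ∧ 0 < β t ∧ 0 < γ t ∧
    μ t ^ 2 + ν t ^ 2 < β t * γ t ∧
    HasDerivWithinAt α
      (2 * (β t ^ 2 - α t ^ 2) / (β t * γ t - (μ t ^ 2 + ν t ^ 2)) -
        4 * α t ^ 2 * ν t ^ 2 / (β t * γ t - (μ t ^ 2 + ν t ^ 2)) ^ 2) s t ∧
    HasDerivWithinAt β
      (β t / α t * ((α t ^ 2 - β t ^ 2) / (β t * γ t - (μ t ^ 2 + ν t ^ 2)))) s t ∧
    HasDerivWithinAt γ
      (-4 + 2 * β t / α t +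
        γ t / α t * ((α t ^ 2 - β t ^ 2) / (β t * γ t - (μ t ^ 2 + ν t ^ 2)))) s t ∧
    HasDerivWithinAt μ
      (μ t * (α t ^ 2 - β t ^ 2) / (α t * (β t * γ t - (μ t ^ 2 + ν t ^ 2)))) s t ∧
    HasDerivWithinAt ν
      (-(ν t * (α t ^ 2 + β t ^ 2)) / (α t * (β t * γ t - (μ t ^ 2 + ν t ^ 2)))) s t

open Set Filter Topology

section Calculus

variable {f f' : ℝ → ℝ} {a : ℝ}

theorem le_add_mul_sub_of_hasDerivWithinAt_Ici_le {C : ℝ}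
    (hf : ∀ t ∈ Ici a, HasDerivWithinAt f (f' t) (Ici a) t) (hC : ∀ t ∈ Ici a, f' t ≤ C) :
    ∀ t ∈ Ici a, f t ≤ f a + C * (t - a) := by
  intro t ht
  refine image_le_of_deriv_right_le_deriv_boundary (b := t)
    (fun x hx ↦ (hf x hx.1).continuousWithinAt.mono Icc_subset_Ici_self)
    (fun x hx ↦ (hf x hx.1).mono (Ici_subset_Ici.2 hx.1)) (B := fun x ↦ f a + C * (x - a))
    (by simp) (by fun_prop) (fun x _ ↦ ?_) (fun x hx ↦ hC x hx.1) ⟨ht, le_rfl⟩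
  simpa using (((hasDerivAt_id x).sub_const a).const_mul C).const_add (f a) |>.hasDerivWithinAt

theorem antitoneOn_Ici_of_hasDerivWithinAt_nonpos
    (hf : ∀ t ∈ Ici a, HasDerivWithinAt f (f' t) (Ici a) t) (hf' : ∀ t ∈ Ici a, f' t ≤ 0) :
    AntitoneOn f (Ici a) := by
  intro s hs t _ hst
  have hsub : Ici s ⊆ Ici a := Ici_subset_Ici.2 hs
  simpa using le_add_mul_sub_of_hasDerivWithinAt_Ici_le (fun x hx ↦ (hf x (hsub hx)).mono hsub)
    (fun x hx ↦ hf' x (hsub hx)) t hst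

theorem monotoneOn_Ici_of_hasDerivWithinAt_nonneg
    (hf : ∀ t ∈ Ici a, HasDerivWithinAt f (f' t) (Ici a) t) (hf' : ∀ t ∈ Ici a, 0 ≤ f' t) :
    MonotoneOn f (Ici a) := fun _ hs _ ht hst ↦
  neg_le_neg_iff.1 <| antitoneOn_Ici_of_hasDerivWithinAt_nonpos (fun x hx ↦ (hf x hx).neg)
    (fun x hx ↦ neg_nonpos.2 (hf' x hx)) hs ht hst

theorem le_max_of_hasDerivWithinAt_nonpos_of_le {c : ℝ}
    (hf : ∀ t ∈ Ici a, HasDerivWithinAt f (f' t) (Ici a) t)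
    (hf' : ∀ t ∈ Ici a, c ≤ f t → f' t ≤ 0) : ∀ t ∈ Ici a, f t ≤ max (f a) c := by
  intro t ht
  have key : ∀ r > 0, f t ≤ max (f a) c + r * (t - a + 1) := by
    intro r hr
    refine image_le_of_deriv_right_lt_deriv_boundary (b := t)
      (fun x hx ↦ (hf x hx.1).continuousWithinAt.mono Icc_subset_Ici_self)
      (fun x hx ↦ (hf x hx.1).mono (Ici_subset_Ici.2 hx.1))
      (B := fun x ↦ max (f a) c + r * (x - a + 1)) (B' := fun _ ↦ r) ?_ (fun x ↦ ?_)
      (fun x hx hfx ↦ ?_) ⟨ht, le_rfl⟩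
    · simp only [sub_self, zero_add, mul_one]
      linarith [le_max_left (f a) c]
    · simpa using ((((hasDerivAt_id x).sub_const a).add_const 1).const_mul r).const_add
        (max (f a) c)
    · refine (hf' x hx.1 ?_).trans_lt hr
      have : 0 ≤ r * (x - a + 1) := mul_nonneg hr.le (by linarith [hx.1])
      linarith [hfx, le_max_right (f a) c]
  have ht1 : 0 < t - a + 1 := by linarith [show a ≤ t from ht]
  refine le_of_forall_pos_le_add fun ε hε ↦ ?_
  simpa [div_mul_cancel₀ ε ht1.ne'] using key (ε / (t - a + 1)) (by positivity)

theorem min_le_of_hasDerivWithinAt_nonneg_of_le {c : ℝ}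
    (hf : ∀ t ∈ Ici a, HasDerivWithinAt f (f' t) (Ici a) t)
    (hf' : ∀ t ∈ Ici a, f t ≤ c → 0 ≤ f' t) : ∀ t ∈ Ici a, min (f a) c ≤ f t := by
  intro t ht
  have := le_max_of_hasDerivWithinAt_nonpos_of_le (f := fun x ↦ -f x) (c := -c)
    (fun x hx ↦ (hf x hx).neg) (fun x hx hx' ↦ neg_nonpos.2 (hf' x hx (neg_le_neg_iff.1 hx'))) t ht
  rw [max_neg_neg] at this
  linarith

theorem tendsto_atBot_of_hasDerivWithinAt_le_neg {c : ℝ} (hc : 0 < c)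
    (hf : ∀ t ∈ Ici a, HasDerivWithinAt f (f' t) (Ici a) t) (hf' : ∀ t ∈ Ici a, f' t ≤ -c) :
    Tendsto f atTop atBot := by
  refine tendsto_atBot_mono' atTop ?_ (tendsto_atBot_add_const_left _ (f a)
    ((tendsto_atTop_add_const_right _ (-a) tendsto_id).const_mul_atTop_of_neg (neg_lt_zero.2 hc)))
  filter_upwards [eventually_ge_atTop a] with t ht
  simpa [sub_eq_add_neg] using le_add_mul_sub_of_hasDerivWithinAt_Ici_le hf hf' t ht

theorem tendsto_atBot_of_hasDerivWithinAt_le_neg_div {c p q : ℝ} (hc : 0 < c) (hp : 0 < p)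
    (hq : 0 < q) (hf : ∀ t ∈ Ici 0, HasDerivWithinAt f (f' t) (Ici 0) t)
    (hf' : ∀ t ∈ Ici 0, f' t ≤ -(c / (p + q * t))) : Tendsto f atTop atBot := by
  have hpos : ∀ t ∈ Ici (0 : ℝ), 0 < p + q * t := fun t ht ↦ by
    have : 0 ≤ q * t := mul_nonneg hq.le ht
    linarith
  have hg : AntitoneOn (fun t ↦ f t + c / q * Real.log (p + q * t)) (Ici 0) := by
    have hlog : ∀ t ∈ Ici (0 : ℝ), HasDerivAt (fun t ↦ Real.log (p + q * t)) (q / (p + q * t)) t :=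
      fun t ht ↦ by
        simpa using (((hasDerivAt_id t).const_mul q).const_add p).log (hpos t ht).ne'
    refine antitoneOn_Ici_of_hasDerivWithinAt_nonpos
      (fun t ht ↦ (hf t ht).add ((hlog t ht).hasDerivWithinAt.const_mul _)) fun t ht ↦ ?_
    have : c / q * (q / (p + q * t)) = c / (p + q * t) := by field_simp
    simp only [this]
    linarith [hf' t ht]
  have hlog : Tendsto (fun t ↦ c / q * Real.log (p + q * t)) atTop atTop :=
    (Real.tendsto_log_atTop.comp (tendsto_atTop_add_const_left _ p
      (tendsto_id.const_mul_atTop hq))).const_mul_atTop (div_pos hc hq)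
  refine tendsto_atBot_mono' atTop ?_ (tendsto_atBot_add_const_left _ (f 0 + c / q * Real.log p)
    (tendsto_neg_atTop_atBot.comp hlog))
  filter_upwards [eventually_ge_atTop 0] with t ht
  have := hg self_mem_Ici ht ht
  simp only [mul_zero, add_zero] at this
  simp only [Function.comp_apply]
  linarith

end Calculus

namespace SystemA

def D (β γ μ ν : ℝ → ℝ) (t : ℝ) : ℝ := β t * γ t - (μ t ^ 2 + ν t ^ 2)

noncomputable def k (β γ μ ν : ℝ → ℝ) (t : ℝ) : ℝ := ν t ^ 2 / D β γ μ ν t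

noncomputable def L (α β : ℝ → ℝ) (t : ℝ) : ℝ := Real.log (β t) - Real.log (α t)

variable {α β : ℝ → ℝ} {t c : ℝ}

theorem log_le_L_iff (hα : 0 < α t) (hβ : 0 < β t) (hc : 0 < c) :
    Real.log c ≤ L α β t ↔ c * α t ≤ β t := by
  rw [L, ← Real.log_div hβ.ne' hα.ne', Real.log_le_log_iff hc (div_pos hβ hα), le_div_iff₀ hα]

theorem L_le_log_iff (hα : 0 < α t) (hβ : 0 < β t) (hc : 0 < c) :
    L α β t ≤ Real.log c ↔ β t ≤ c * α t := by
  rw [L, ← Real.log_div hβ.ne' hα.ne', Real.log_le_log_iff (div_pos hβ hα) hc, div_le_iff₀ hα]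

end SystemA

open SystemA

namespace IsAdmissibleSolutionA

variable {α β γ μ ν : ℝ → ℝ} {s : Set ℝ} {t : ℝ}

theorem alpha_pos (H : IsAdmissibleSolutionA α β γ μ ν s) (ht : t ∈ s) : 0 < α t :=
  (H t ht).1

theorem beta_pos (H : IsAdmissibleSolutionA α β γ μ ν s) (ht : t ∈ s) : 0 < β t :=
  (H t ht).2.1

theorem D_pos (H : IsAdmissibleSolutionA α β γ μ ν s) (ht : t ∈ s) : 0 < D β γ μ ν t :=
  sub_pos.2 (H t ht).2.2.2.1

theorem k_nonneg (H : IsAdmissibleSolutionA α β γ μ ν s) (ht : t ∈ s) : 0 ≤ k β γ μ ν t :=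
  div_nonneg (sq_nonneg _) (H.D_pos ht).le

theorem hasDerivWithinAt_D (H : IsAdmissibleSolutionA α β γ μ ν s) (ht : t ∈ s) :
    HasDerivWithinAt (D β γ μ ν) (2 * α t - 4 * β t + 4 * α t * k β γ μ ν t) s t := by
  obtain ⟨hα, -, -, -, -, hβ', hγ', hμ', hν'⟩ := H t ht
  have hD := (H.D_pos ht).ne'
  refine ((hβ'.mul hγ').sub ((hμ'.pow 2).add (hν'.pow 2))).congr_deriv ?_
  simp only [D, k] at hD ⊢
  field_simp
  ring

theorem hasDerivWithinAt_k (H : IsAdmissibleSolutionA α β γ μ ν s) (ht : t ∈ s) :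
    HasDerivWithinAt (k β γ μ ν)
      (-(2 * α t * k β γ μ ν t / D β γ μ ν t) * (1 + (1 - β t / α t) ^ 2 + 2 * k β γ μ ν t))
      s t := by
  obtain ⟨hα, -, -, -, -, -, -, -, hν'⟩ := H t ht
  have hD := (H.D_pos ht).ne'
  refine ((hν'.pow 2).div (H.hasDerivWithinAt_D ht) hD).congr_deriv ?_
  simp only [D, k, Pi.pow_apply] at hD ⊢
  field_simp [hα.ne']
  ring

theorem hasDerivWithinAt_L (H : IsAdmissibleSolutionA α β γ μ ν s) (ht : t ∈ s) :
    HasDerivWithinAt (L α β)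
      (3 * (α t ^ 2 - β t ^ 2) / (α t * D β γ μ ν t) + 4 * α t * k β γ μ ν t / D β γ μ ν t)
      s t := by
  obtain ⟨hα, hβ, -, -, hα', hβ', -⟩ := H t ht
  have hD := (H.D_pos ht).ne'
  refine ((hβ'.log hβ.ne').sub (hα'.log hα.ne')).congr_deriv ?_
  simp only [D, k] at hD ⊢
  field_simp
  ring

theorem hasDerivWithinAt_log_alpha (H : IsAdmissibleSolutionA α β γ μ ν s) (ht : t ∈ s) :
    HasDerivWithinAt (fun u ↦ Real.log (α u))
      (2 * (β t ^ 2 - α t ^ 2) / (α t * D β γ μ ν t) - 4 * α t * k β γ μ ν t / D β γ μ ν t)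
      s t := by
  obtain ⟨hα, -, -, -, hα', -⟩ := H t ht
  have hD := (H.D_pos ht).ne'
  refine (hα'.log hα.ne').congr_deriv ?_
  simp only [D, k] at hD ⊢
  field_simp

theorem deriv_k_le (H : IsAdmissibleSolutionA α β γ μ ν s) (ht : t ∈ s) :
    -(2 * α t * k β γ μ ν t / D β γ μ ν t) * (1 + (1 - β t / α t) ^ 2 + 2 * k β γ μ ν t) ≤
      -(2 * α t * k β γ μ ν t / D β γ μ ν t) := by
  have := H.alpha_pos ht
  have := H.k_nonneg ht
  have := H.D_pos ht
  have : 0 ≤ 2 * α t * k β γ μ ν t / D β γ μ ν t * ((1 - β t / α t) ^ 2 + 2 * k β γ μ ν t) := by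
    positivity
  linarith

theorem le_deriv_L_of_beta_le (H : IsAdmissibleSolutionA α β γ μ ν s) (ht : t ∈ s) {c : ℝ}
    (hβα : β t ≤ c * α t) :
    3 * (1 - c ^ 2) * α t / D β γ μ ν t ≤
      3 * (α t ^ 2 - β t ^ 2) / (α t * D β γ μ ν t) + 4 * α t * k β γ μ ν t / D β γ μ ν t := by
  have hα := H.alpha_pos ht
  have hβ := H.beta_pos ht
  have hD := H.D_pos ht
  have := H.k_nonneg ht
  have hsq : (1 - c ^ 2) * α t ^ 2 ≤ α t ^ 2 - β t ^ 2 := by nlinarith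
  have : 3 * (1 - c ^ 2) * α t / D β γ μ ν t ≤ 3 * (α t ^ 2 - β t ^ 2) / (α t * D β γ μ ν t) := by
    rw [div_le_div_iff₀ hD (by positivity)]
    nlinarith [mul_le_mul_of_nonneg_right hsq (mul_pos hα hD).le]
  have : 0 ≤ 4 * α t * k β γ μ ν t / D β γ μ ν t := by positivity
  linarith

theorem antitoneOn_k (H : IsAdmissibleSolutionA α β γ μ ν (Ici 0)) :
    AntitoneOn (k β γ μ ν) (Ici 0) :=
  antitoneOn_Ici_of_hasDerivWithinAt_nonpos (fun _ ht ↦ H.hasDerivWithinAt_k ht) fun t ht ↦ by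
    have := H.alpha_pos ht
    have := H.k_nonneg ht
    have := H.D_pos ht
    exact (H.deriv_k_le ht).trans (neg_nonpos.2 (by positivity))

theorem min_L_le (H : IsAdmissibleSolutionA α β γ μ ν (Ici 0)) :
    ∀ t ∈ Ici 0, min (L α β 0) 0 ≤ L α β t :=
  min_le_of_hasDerivWithinAt_nonneg_of_le (fun _ ht ↦ H.hasDerivWithinAt_L ht) fun t ht hL ↦ by
    rw [← Real.log_one, L_le_log_iff (H.alpha_pos ht) (H.beta_pos ht) one_pos] at hL
    simpa using H.le_deriv_L_of_beta_le ht hL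

theorem L_le (H : IsAdmissibleSolutionA α β γ μ ν (Ici 0)) :
    ∀ t ∈ Ici 0, L α β t ≤ max (L α β 0 + 2 * k β γ μ ν 0) (2 * k β γ μ ν 0) := by
  intro t ht
  refine le_trans ?_ (le_max_of_hasDerivWithinAt_nonpos_of_le
    (f := fun t ↦ L α β t + 2 * k β γ μ ν t)
    (fun _ ht ↦ (H.hasDerivWithinAt_L ht).add ((H.hasDerivWithinAt_k ht).const_mul 2))
    (fun t ht hge ↦ ?_) t ht)
  · linarith [H.k_nonneg ht]
  -- once `L + 2k` exceeds `2 k(0)`, monotonicity of `k` forces `L ≥ 0`, i.e. `α ≤ β`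
  have hL : Real.log 1 ≤ L α β t := by
    linarith [Real.log_one, H.antitoneOn_k self_mem_Ici ht ht]
  rw [log_le_L_iff (H.alpha_pos ht) (H.beta_pos ht) one_pos, one_mul] at hL
  have := H.alpha_pos ht
  have := H.D_pos ht
  have : 3 * (α t ^ 2 - β t ^ 2) / (α t * D β γ μ ν t) ≤ 0 :=
    div_nonpos_of_nonpos_of_nonneg (by nlinarith [H.beta_pos ht]) (by positivity)
  have := H.deriv_k_le ht
  have : 4 * α t * k β γ μ ν t / D β γ μ ν t = 2 * (2 * α t * k β γ μ ν t / D β γ μ ν t) := by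
    ring
  linarith

theorem exists_alpha_le (H : IsAdmissibleSolutionA α β γ μ ν (Ici 0)) :
    ∃ A, ∀ t ∈ Ici 0, α t ≤ A := by
  have hanti : AntitoneOn (fun t ↦ Real.log (α t) + 2 / 3 * L α β t) (Ici 0) := by
    refine antitoneOn_Ici_of_hasDerivWithinAt_nonpos
      (fun _ ht ↦ (H.hasDerivWithinAt_log_alpha ht).add ((H.hasDerivWithinAt_L ht).const_mul _))
      fun t ht ↦ ?_
    have := H.alpha_pos ht
    have := H.k_nonneg ht
    have := H.D_pos ht
    have : 0 ≤ α t * k β γ μ ν t / D β γ μ ν t := by positivity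
    linarith [show 2 * (β t ^ 2 - α t ^ 2) / (α t * D β γ μ ν t) - 4 * α t * k β γ μ ν t /
      D β γ μ ν t + 2 / 3 * (3 * (α t ^ 2 - β t ^ 2) / (α t * D β γ μ ν t) +
        4 * α t * k β γ μ ν t / D β γ μ ν t) = -(4 / 3) * (α t * k β γ μ ν t / D β γ μ ν t) by
      ring]
  refine ⟨Real.exp (Real.log (α 0) + 2 / 3 * L α β 0 - 2 / 3 * min (L α β 0) 0), fun t ht ↦ ?_⟩
  rw [← Real.log_le_iff_le_exp (H.alpha_pos ht)]
  linarith [hanti self_mem_Ici ht ht, H.min_L_le t ht]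

theorem exists_pos_le_alpha (H : IsAdmissibleSolutionA α β γ μ ν (Ici 0)) :
    ∃ a, 0 < a ∧ ∀ t ∈ Ici 0, a ≤ α t := by
  have hmono : MonotoneOn (fun t ↦ Real.log (α t) + 2 / 3 * L α β t - 2 / 3 * k β γ μ ν t)
      (Ici 0) := by
    refine monotoneOn_Ici_of_hasDerivWithinAt_nonneg (fun _ ht ↦
      ((H.hasDerivWithinAt_log_alpha ht).add ((H.hasDerivWithinAt_L ht).const_mul _)).sub
        ((H.hasDerivWithinAt_k ht).const_mul _)) fun t ht ↦ ?_
    have := H.deriv_k_le ht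
    ring_nf at this ⊢
    linarith
  refine ⟨Real.exp (Real.log (α 0) + 2 / 3 * L α β 0 - 2 / 3 * k β γ μ ν 0 -
    2 / 3 * max (L α β 0 + 2 * k β γ μ ν 0) (2 * k β γ μ ν 0)), Real.exp_pos _, fun t ht ↦ ?_⟩
  rw [← Real.le_log_iff_exp_le (H.alpha_pos ht)]
  linarith [hmono self_mem_Ici ht ht, H.L_le t ht, H.k_nonneg ht]

theorem exists_D_le (H : IsAdmissibleSolutionA α β γ μ ν (Ici 0)) :
    ∃ q, 0 < q ∧ ∀ t ∈ Ici 0, D β γ μ ν t ≤ D β γ μ ν 0 + q * t := by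
  obtain ⟨A, hA⟩ := H.exists_alpha_le
  have hA0 : 0 < A := (H.alpha_pos self_mem_Ici).trans_le (hA 0 self_mem_Ici)
  have hD' : ∀ t ∈ Ici (0 : ℝ),
      2 * α t - 4 * β t + 4 * α t * k β γ μ ν t ≤ 2 * A * (1 + 2 * k β γ μ ν 0) := by
    intro t ht
    have := H.k_nonneg ht
    nlinarith [H.beta_pos ht, hA t ht, H.alpha_pos ht,
      mul_le_mul (hA t ht) (H.antitoneOn_k self_mem_Ici ht ht) this hA0.le]
  refine ⟨2 * A * (1 + 2 * k β γ μ ν 0), by positivity [H.k_nonneg self_mem_Ici], fun t ht ↦ ?_⟩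
  simpa using
    le_add_mul_sub_of_hasDerivWithinAt_Ici_le (fun _ ht ↦ H.hasDerivWithinAt_D ht) hD' t ht

theorem eventually_k_le (H : IsAdmissibleSolutionA α β γ μ ν (Ici 0)) {ε : ℝ} (hε : 0 < ε) :
    ∀ᶠ t in atTop, k β γ μ ν t ≤ ε := by
  suffices ∃ T ∈ Ici (0 : ℝ), k β γ μ ν T ≤ ε by
    obtain ⟨T, hT, hkT⟩ := this
    filter_upwards [eventually_ge_atTop T] with t ht
    exact (H.antitoneOn_k hT (le_trans hT ht) ht).trans hkT
  by_contra! hbig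
  obtain ⟨a, ha, hαa⟩ := H.exists_pos_le_alpha
  obtain ⟨q, hq, hDq⟩ := H.exists_D_le
  -- while `k ≥ ε`, `k` decreases at least like `-(2aε/q) log (D(0) + q t)`
  have hk : Tendsto (k β γ μ ν) atTop atBot := by
    refine tendsto_atBot_of_hasDerivWithinAt_le_neg_div (c := 2 * a * ε) (by positivity)
      (H.D_pos self_mem_Ici) hq (fun _ ht ↦ H.hasDerivWithinAt_k ht)
      fun t ht ↦ (H.deriv_k_le ht).trans (neg_le_neg ?_)
    have := H.alpha_pos ht
    refine div_le_div₀ (by positivity [H.k_nonneg ht]) ?_ (H.D_pos ht) (hDq t ht)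
    gcongr
    exacts [hαa t ht, (hbig t ht).le]
  obtain ⟨t, ht, hneg⟩ := ((eventually_ge_atTop 0).and (hk.eventually_lt_atBot 0)).exists
  exact (H.k_nonneg ht).not_gt hneg

theorem eventually_mul_alpha_le_beta (H : IsAdmissibleSolutionA α β γ μ ν (Ici 0)) {c : ℝ}
    (hc₀ : 0 < c) (hc₁ : c < 1) : ∀ᶠ t in atTop, c * α t ≤ β t := by
  suffices ∃ T ∈ Ici (0 : ℝ), Real.log c ≤ L α β T by
    obtain ⟨T, hT, hLT⟩ := this
    have hsub : Ici T ⊆ Ici 0 := Ici_subset_Ici.2 hT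
    have hbarrier := min_le_of_hasDerivWithinAt_nonneg_of_le (c := Real.log c)
      (fun _ ht ↦ (H.hasDerivWithinAt_L (hsub ht)).mono hsub) fun t ht hL ↦ by
        rw [L_le_log_iff (H.alpha_pos (hsub ht)) (H.beta_pos (hsub ht)) hc₀] at hL
        have := H.alpha_pos (hsub ht)
        have := H.D_pos (hsub ht)
        have : 0 ≤ 3 * (1 - c ^ 2) * α t / D β γ μ ν t := by
          have : 0 < 1 - c ^ 2 := by nlinarith
          positivity
        exact this.trans (H.le_deriv_L_of_beta_le (hsub ht) hL)
    filter_upwards [eventually_ge_atTop T] with t ht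
    rw [← log_le_L_iff (H.alpha_pos (hsub ht)) (H.beta_pos (hsub ht)) hc₀]
    simpa [hLT] using hbarrier t ht
  by_contra! hsmall
  obtain ⟨a, ha, hαa⟩ := H.exists_pos_le_alpha
  obtain ⟨q, hq, hDq⟩ := H.exists_D_le
  have hc : 0 < 1 - c ^ 2 := by nlinarith
  -- while `β ≤ cα`, `L` increases at least like `3 (1 - c²) (a/q) log (D(0) + q t)`
  have hL : Tendsto (fun t ↦ -L α β t) atTop atBot := by
    refine tendsto_atBot_of_hasDerivWithinAt_le_neg_div (c := 3 * (1 - c ^ 2) * a) (by positivity)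
      (H.D_pos self_mem_Ici) hq (fun _ ht ↦ (H.hasDerivWithinAt_L ht).neg)
      fun t ht ↦ neg_le_neg ?_
    have hβ := (L_le_log_iff (H.alpha_pos ht) (H.beta_pos ht) hc₀).1 (hsmall t ht).le
    refine le_trans ?_ (H.le_deriv_L_of_beta_le ht hβ)
    have := H.alpha_pos ht
    refine div_le_div₀ (by positivity) ?_ (H.D_pos ht) (hDq t ht)
    gcongr
    exact hαa t ht
  obtain ⟨t, ht, hneg⟩ :=
    ((eventually_ge_atTop 0).and (hL.eventually_lt_atBot (-Real.log c))).exists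
  linarith [hsmall t ht]

end IsAdmissibleSolutionA

/-- There exist no differentiable functions `α β γ μ ν : [0,∞) → ℝ` forming an admissible
solution of System A on all of `[0,∞)`: every homogeneous Ricci flow on
`SO(3) ⋉ ℝ³ / SO(2)` has a finite-time extinction. -/
theorem no_admissible_solution_systemA_on_Ici :
    ¬ ∃ α β γ μ ν : ℝ → ℝ, IsAdmissibleSolutionA α β γ μ ν (Set.Ici 0) := by
  rintro ⟨α, β, γ, μ, ν, H⟩
  obtain ⟨a, ha, hαa⟩ := H.exists_pos_le_alpha
  obtain ⟨T, hT⟩ := ((H.eventually_k_le (ε := 1 / 8) (by norm_num)).and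
    ((H.eventually_mul_alpha_le_beta (c := 3 / 4) (by norm_num) (by norm_num)).and
      (eventually_ge_atTop 0))).exists_forall_of_atTop
  have hT0 : Ici T ⊆ Ici 0 := Ici_subset_Ici.2 (hT T le_rfl).2.2
  -- `D' ≤ 2α - 3α + α/2 = -α/2`
  have hD' : ∀ t ∈ Ici T, 2 * α t - 4 * β t + 4 * α t * k β γ μ ν t ≤ -(a / 2) := by
    intro t ht
    obtain ⟨hk, hβ, -⟩ := hT t ht
    nlinarith [hαa t (hT0 ht), H.alpha_pos (hT0 ht)]
  have hD : Tendsto (D β γ μ ν) atTop atBot := tendsto_atBot_of_hasDerivWithinAt_le_neg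
    (half_pos ha) (fun _ ht ↦ (H.hasDerivWithinAt_D (hT0 ht)).mono hT0) hD'
  obtain ⟨t, ht, hneg⟩ := ((eventually_ge_atTop 0).and (hD.eventually_lt_atBot 0)).exists
  exact (H.D_pos ht).not_gt hneg
end

section
/- There exist no differentiable functions α, β, γ : [0,∞) → ℝ with α(t) > 0, β(t) > 0, γ(t) > 0 for all t ≥ 0 that satisfy on [0,∞) the system α' = 2(β²−α²)/(βγ), β' = β(α²−β²)/(αβγ), γ' = −4 + 2β/α + γ(α²−β²)/(αβγ). (This is System A with μ ≡ ν ≡ 0: the homogeneous Ricci flow on SO(3)⋉ℝ³/SO(2) with vanishing cross-terms has a finite-time extinction.) -/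
/-- The derivative of the Lyapunov function
`t ↦ γ t * (α t + β t) / √(α t * β t) + 4 * t` along System A without cross terms. -/
noncomputable def systemADeriv (α β γ : ℝ → ℝ) (t : ℝ) : ℝ :=
  (((-4 + 2 * β t / α t + γ t * (α t ^ 2 - β t ^ 2) / (α t * β t * γ t)) * (α t + β t) +
      γ t * (2 * (β t ^ 2 - α t ^ 2) / (β t * γ t) +
        β t * (α t ^ 2 - β t ^ 2) / (α t * β t * γ t))) * Real.sqrt (α t * β t) -
    γ t * (α t + β t) *
      ((2 * (β t ^ 2 - α t ^ 2) / (β t * γ t) * β t +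
        α t * (β t * (α t ^ 2 - β t ^ 2) / (α t * β t * γ t))) /
        (2 * Real.sqrt (α t * β t)))) / Real.sqrt (α t * β t) ^ 2 + 4

/-- The key pointwise inequality: the derivative of the Lyapunov function is nonpositive
(in fact `≤ -(a+b)³/(2√(ab)³) + 4 ≤ 0` by AM-GM). -/
lemma systemADeriv_nonpos (a b c : ℝ) (ha : 0 < a) (hb : 0 < b) (hc : 0 < c) :
    (((-4 + 2 * b / a + c * (a ^ 2 - b ^ 2) / (a * b * c)) * (a + b) +
      c * (2 * (b ^ 2 - a ^ 2) / (b * c) +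
        b * (a ^ 2 - b ^ 2) / (a * b * c))) * Real.sqrt (a * b) -
    c * (a + b) *
      ((2 * (b ^ 2 - a ^ 2) / (b * c) * b +
        a * (b * (a ^ 2 - b ^ 2) / (a * b * c))) /
        (2 * Real.sqrt (a * b)))) / Real.sqrt (a * b) ^ 2 + 4 ≤ 0 := by
  have hab : 0 < a * b := mul_pos ha hb
  set q := Real.sqrt (a * b) with hqdef
  have hq : 0 < q := Real.sqrt_pos.2 hab
  have h2 : q ^ 2 = a * b := Real.sq_sqrt hab.le
  set X := (-4 + 2 * b / a + c * (a ^ 2 - b ^ 2) / (a * b * c)) * (a + b) +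
      c * (2 * (b ^ 2 - a ^ 2) / (b * c) +
        b * (a ^ 2 - b ^ 2) / (a * b * c)) with hX
  set Z := 2 * (b ^ 2 - a ^ 2) / (b * c) * b +
        a * (b * (a ^ 2 - b ^ 2) / (a * b * c)) with hZ
  -- key algebraic identity
  have hid : 2 * X * (a * b) - c * (a + b) * Z = -(a + b) ^ 3 := by
    rw [hX, hZ]
    field_simp
    ring
  -- AM-GM: 2q ≤ a + b
  have h2q : 2 * q ≤ a + b := by
    have h1 : q ≤ (a + b) / 2 := by
      have := Real.sqrt_le_sqrt (show a * b ≤ ((a + b) / 2) ^ 2 by nlinarith [sq_nonneg (a - b)])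
      rwa [Real.sqrt_sq (by positivity : (0:ℝ) ≤ (a + b) / 2)] at this
    linarith
  set M := X * q - c * (a + b) * (Z / (2 * q)) with hM
  have e : 2 * q * M = 2 * X * q ^ 2 - c * (a + b) * Z := by
    rw [hM]; field_simp
  rw [h2, hid] at e
  -- 8 q³ ≤ (a+b)³
  have hpow : (2 * q) ^ 3 ≤ (a + b) ^ 3 :=
    pow_le_pow_left₀ (by positivity) h2q 3
  have hMle : M ≤ -4 * q ^ 2 := by
    have h1 : 2 * q * M ≤ 2 * q * (-4 * q ^ 2) := by nlinarith
    exact le_of_mul_le_mul_left h1 (by positivity)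
  have : M / q ^ 2 ≤ -4 := by
    rw [div_le_iff₀ (by positivity : (0:ℝ) < q ^ 2)]
    linarith
  linarith

/-- There exist no differentiable functions `α β γ : [0,∞) → ℝ`, positive on `[0,∞)`,
satisfying on `[0,∞)` the system
`α' = 2(β²−α²)/(βγ)`, `β' = β(α²−β²)/(αβγ)`, `γ' = −4 + 2β/α + γ(α²−β²)/(αβγ)`
(System A with `μ ≡ ν ≡ 0`): the homogeneous Ricci flow on `SO(3) ⋉ ℝ³ / SO(2)` with
vanishing cross-terms has a finite-time extinction. -/
theorem no_admissible_solution_systemA_no_cross_terms :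
    ¬ ∃ α β γ : ℝ → ℝ, ∀ t ∈ Set.Ici (0 : ℝ),
      0 < α t ∧ 0 < β t ∧ 0 < γ t ∧
      HasDerivWithinAt α
        (2 * (β t ^ 2 - α t ^ 2) / (β t * γ t)) (Set.Ici 0) t ∧
      HasDerivWithinAt β
        (β t * (α t ^ 2 - β t ^ 2) / (α t * β t * γ t)) (Set.Ici 0) t ∧
      HasDerivWithinAt γ
        (-4 + 2 * β t / α t + γ t * (α t ^ 2 - β t ^ 2) / (α t * β t * γ t))
        (Set.Ici 0) t := by
  rintro ⟨a, b, c, h⟩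
  set W : ℝ → ℝ := fun t => c t * (a t + b t) / Real.sqrt (a t * b t) + 4 * t with hWdef
  have hasW : ∀ t ∈ Set.Ici (0:ℝ),
      HasDerivWithinAt W (systemADeriv a b c t) (Set.Ici 0) t := by
    intro t ht
    obtain ⟨ha, hb, hc, hA, hB, hC⟩ := h t ht
    have hab : 0 < a t * b t := mul_pos ha hb
    have hN : HasDerivWithinAt (fun u => c u * (a u + b u))
        ((-4 + 2 * b t / a t + c t * (a t ^ 2 - b t ^ 2) / (a t * b t * c t)) * (a t + b t) +
          c t * (2 * (b t ^ 2 - a t ^ 2) / (b t * c t) +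
            b t * (a t ^ 2 - b t ^ 2) / (a t * b t * c t))) (Set.Ici 0) t :=
      hC.mul (hA.add hB)
    have hP : HasDerivWithinAt (fun u => a u * b u)
        (2 * (b t ^ 2 - a t ^ 2) / (b t * c t) * b t +
          a t * (b t * (a t ^ 2 - b t ^ 2) / (a t * b t * c t))) (Set.Ici 0) t :=
      hA.mul hB
    have hQ : HasDerivWithinAt (fun u => Real.sqrt (a u * b u))
        ((2 * (b t ^ 2 - a t ^ 2) / (b t * c t) * b t +
          a t * (b t * (a t ^ 2 - b t ^ 2) / (a t * b t * c t))) /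
          (2 * Real.sqrt (a t * b t))) (Set.Ici 0) t :=
      hP.sqrt hab.ne'
    have hV := hN.div hQ (Real.sqrt_ne_zero'.2 hab).symm.symm
    have hlin : HasDerivWithinAt (fun u : ℝ => 4 * u) (4 * 1) (Set.Ici 0) t :=
      (hasDerivWithinAt_id t _).const_mul 4
    have := hV.add hlin
    rw [mul_one] at this
    exact this
  have hle : ∀ t ∈ Set.Ici (0:ℝ), systemADeriv a b c t ≤ 0 := by
    intro t ht
    obtain ⟨ha, hb, hc, -, -, -⟩ := h t ht
    exact systemADeriv_nonpos (a t) (b t) (c t) ha hb hc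
  have hanti : AntitoneOn W (Set.Ici 0) := by
    refine antitoneOn_of_hasDerivWithinAt_nonpos (convex_Ici 0)
      (fun t ht => (hasW t ht).continuousWithinAt)
      (f' := fun t => systemADeriv a b c t)
      (fun t ht => ((hasW t (interior_subset ht)).mono interior_subset))
      (fun t ht => hle t (interior_subset ht))
  obtain ⟨ha0, hb0, hc0, -, -, -⟩ := h 0 Set.self_mem_Ici
  set T := c 0 * (a 0 + b 0) / Real.sqrt (a 0 * b 0) with hT
  have hT0 : 0 < T := by
    apply div_pos (by positivity) (Real.sqrt_pos.2 (mul_pos ha0 hb0))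
  have hTmem : T ∈ Set.Ici (0:ℝ) := hT0.le
  obtain ⟨haT, hbT, hcT, -, -, -⟩ := h T hTmem
  have hWT : c T * (a T + b T) / Real.sqrt (a T * b T) > 0 :=
    div_pos (by positivity) (Real.sqrt_pos.2 (mul_pos haT hbT))
  have := hanti (Set.self_mem_Ici) hTmem hT0.le
  rw [hWdef] at this
  simp only at this
  linarith
end

section
/- Let α, β, γ, μ, ν be an admissible solution of System A on an interval [0,T) with μ ≡ 0 and ν(0) ≠ 0. Then ν(t) ≠ 0 for all t ∈ [0,T), and the function ε(t) := ν(t)²/(β(t)γ(t)) is strictly decreasing on [0,T). -/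
open Set Topology

theorem eqOn_zero_of_hasDerivWithinAt_mul_self_of_eq_zero_right {f c : ℝ → ℝ} {a b : ℝ}
    (hc : ContinuousOn c (Icc a b))
    (hf : ∀ t ∈ Icc a b, HasDerivWithinAt f (c t * f t) (Icc a b) t) (hb : f b = 0) :
    EqOn f 0 (Icc a b) := by
  obtain ⟨K, hK⟩ := (isCompact_Icc.image_of_continuousOn hc.nnnorm).bddAbove
  have hf' : ∀ t ∈ Ioc a b, HasDerivWithinAt f (c t • f t) (Iic t) t := fun t ht =>
    (hf t (Ioc_subset_Icc_self ht)).mono_of_mem_nhdsWithin (Icc_mem_nhdsLE_of_mem ht)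
  refine ODE_solution_unique_of_mem_Icc_left (v := fun t x => c t • x) (s := fun _ => univ)
    (fun t ht => ((lipschitzWith_smul (c t)).weaken
      (hK ⟨t, Ioc_subset_Icc_self ht, rfl⟩)).lipschitzOnWith)
    (HasDerivWithinAt.continuousOn hf) hf' (fun _ _ => mem_univ _) continuousOn_const
    (fun t _ => by simpa [Pi.zero_def] using hasDerivWithinAt_const t (Iic t) (0 : ℝ))
    (fun _ _ => mem_univ _) hb

theorem ne_zero_of_hasDerivWithinAt_mul_self {f c : ℝ → ℝ} {a b : ℝ}
    (hc : ContinuousOn c (Ico a b))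
    (hf : ∀ t ∈ Ico a b, HasDerivWithinAt f (c t * f t) (Ico a b) t) (ha : f a ≠ 0) :
    ∀ t ∈ Ico a b, f t ≠ 0 := by
  intro t ht hft
  have hsub : Icc a t ⊆ Ico a b := Icc_subset_Ico_right ht.2
  exact ha <| eqOn_zero_of_hasDerivWithinAt_mul_self_of_eq_zero_right (hc.mono hsub)
    (fun s hs => (hf s (hsub hs)).mono hsub) hft (left_mem_Icc.2 ht.1)

namespace IsAdmissibleSolutionA

variable {α β γ μ ν : ℝ → ℝ} {s : Set ℝ}

theorem continuousOn_alpha (h : IsAdmissibleSolutionA α β γ μ ν s) : ContinuousOn α s :=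
  fun t ht => (h t ht).2.2.2.2.1.continuousWithinAt

theorem continuousOn_beta (h : IsAdmissibleSolutionA α β γ μ ν s) : ContinuousOn β s :=
  fun t ht => (h t ht).2.2.2.2.2.1.continuousWithinAt

theorem continuousOn_gamma (h : IsAdmissibleSolutionA α β γ μ ν s) : ContinuousOn γ s :=
  fun t ht => (h t ht).2.2.2.2.2.2.1.continuousWithinAt

theorem continuousOn_nu (h : IsAdmissibleSolutionA α β γ μ ν s) : ContinuousOn ν s :=
  fun t ht => (h t ht).2.2.2.2.2.2.2.2.continuousWithinAt

theorem sq_nu_lt_of_mu_eq_zero (h : IsAdmissibleSolutionA α β γ μ ν s) {t : ℝ} (ht : t ∈ s)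
    (hμ : μ t = 0) : ν t ^ 2 < β t * γ t := by
  simpa [hμ] using (h t ht).2.2.2.1

theorem continuousOn_nu_logDeriv_of_mu_eq_zero (h : IsAdmissibleSolutionA α β γ μ ν s)
    (hμ : ∀ t ∈ s, μ t = 0) :
    ContinuousOn (fun t => -(α t ^ 2 + β t ^ 2) / (α t * (β t * γ t - ν t ^ 2))) s := by
  have hα := h.continuousOn_alpha
  have hβ := h.continuousOn_beta
  have hγ := h.continuousOn_gamma
  have hν := h.continuousOn_nu
  refine ((hα.pow 2).add (hβ.pow 2)).neg.div (hα.mul ((hβ.mul hγ).sub (hν.pow 2)))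
    fun t ht => ?_
  exact (mul_pos (h t ht).1 (sub_pos.2 (h.sq_nu_lt_of_mu_eq_zero ht (hμ t ht)))).ne'

theorem hasDerivWithinAt_nu_of_mu_eq_zero (h : IsAdmissibleSolutionA α β γ μ ν s) {t : ℝ}
    (ht : t ∈ s) (hμ : μ t = 0) :
    HasDerivWithinAt ν (-(α t ^ 2 + β t ^ 2) / (α t * (β t * γ t - ν t ^ 2)) * ν t) s t := by
  convert (h t ht).2.2.2.2.2.2.2.2 using 1
  rw [hμ]
  ring

theorem nu_ne_zero_of_mu_eq_zero {a b : ℝ} (h : IsAdmissibleSolutionA α β γ μ ν (Ico a b))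
    (hμ : ∀ t ∈ Ico a b, μ t = 0) (hν : ν a ≠ 0) : ∀ t ∈ Ico a b, ν t ≠ 0 :=
  ne_zero_of_hasDerivWithinAt_mul_self (h.continuousOn_nu_logDeriv_of_mu_eq_zero hμ)
    (fun t ht => h.hasDerivWithinAt_nu_of_mu_eq_zero ht (hμ t ht)) hν

theorem hasDerivAt_epsilon_of_mu_eq_zero (h : IsAdmissibleSolutionA α β γ μ ν s) {t : ℝ}
    (hs : s ∈ 𝓝 t) (hμ : μ t = 0) :
    HasDerivAt (fun t => ν t ^ 2 / (β t * γ t))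
      (-(2 * ν t ^ 2 *
          ((β t * γ t - ν t ^ 2) * (α t ^ 2 + (α t - β t) ^ 2) + 2 * α t ^ 2 * ν t ^ 2)) /
        (α t * (β t * γ t - ν t ^ 2) * (β t * γ t) ^ 2)) t := by
  obtain ⟨hα, hβ, hγ, -, -, hβ', hγ', -, hν'⟩ := h t (mem_of_mem_nhds hs)
  have hD : β t * γ t - ν t ^ 2 ≠ 0 :=
    (sub_pos.2 (h.sq_nu_lt_of_mu_eq_zero (mem_of_mem_nhds hs) hμ)).ne'
  rw [hμ, zero_pow two_ne_zero, zero_add] at hβ' hγ' hν'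
  refine (((hν'.hasDerivAt hs).pow 2).div ((hβ'.hasDerivAt hs).mul (hγ'.hasDerivAt hs))
    (mul_pos hβ hγ).ne').congr_deriv ?_
  simp only [Pi.mul_apply, Pi.pow_apply]
  field_simp
  ring

theorem strictAntiOn_epsilon_of_mu_eq_zero (h : IsAdmissibleSolutionA α β γ μ ν s)
    (hs : Convex ℝ s) (hμ : ∀ t ∈ s, μ t = 0) (hν : ∀ t ∈ s, ν t ≠ 0) :
    StrictAntiOn (fun t => ν t ^ 2 / (β t * γ t)) s := by
  have hε : ContinuousOn (fun t => ν t ^ 2 / (β t * γ t)) s :=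
    (h.continuousOn_nu.pow 2).div (h.continuousOn_beta.mul h.continuousOn_gamma) fun t ht =>
      (mul_pos (h t ht).2.1 (h t ht).2.2.1).ne'
  refine strictAntiOn_of_deriv_neg hs hε fun t ht => ?_
  have hts := interior_subset ht
  obtain ⟨hα, hβ, hγ, -⟩ := h t hts
  have hD : 0 < β t * γ t - ν t ^ 2 := sub_pos.2 (h.sq_nu_lt_of_mu_eq_zero hts (hμ t hts))
  have hνt := hν t hts
  rw [(h.hasDerivAt_epsilon_of_mu_eq_zero (mem_interior_iff_mem_nhds.1 ht) (hμ t hts)).deriv]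
  refine div_neg_of_neg_of_pos (neg_neg_of_pos ?_) (by positivity)
  have hDα := mul_pos hD (add_pos_of_pos_of_nonneg (pow_pos hα 2) (sq_nonneg (α t - β t)))
  positivity

end IsAdmissibleSolutionA

theorem systemA_epsilon_strictAnti_general (T : ℝ) (α β γ μ ν : ℝ → ℝ)
    (h : IsAdmissibleSolutionA α β γ μ ν (Set.Ico 0 T))
    (hμ : ∀ t ∈ Set.Ico (0 : ℝ) T, μ t = 0) (hν0 : ν 0 ≠ 0) :
    (∀ t ∈ Set.Ico (0 : ℝ) T, ν t ≠ 0) ∧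
      StrictAntiOn (fun t => ν t ^ 2 / (β t * γ t)) (Set.Ico 0 T) := by
  have hν := h.nu_ne_zero_of_mu_eq_zero hμ hν0
  exact ⟨hν, h.strictAntiOn_epsilon_of_mu_eq_zero (convex_Ico 0 T) hμ hν⟩

/-- For an admissible solution of System A on `[0,T)` with `μ ≡ 0` and `ν(0) ≠ 0`,
one has `ν(t) ≠ 0` for all `t ∈ [0,T)` and `ε(t) := ν(t)²/(β(t)γ(t))` is strictly
decreasing on `[0,T)`. -/
theorem systemA_epsilon_strictAnti (T : ℝ) (hT : 0 < T) (α β γ μ ν : ℝ → ℝ)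
    (h : IsAdmissibleSolutionA α β γ μ ν (Set.Ico 0 T))
    (hμ : ∀ t ∈ Set.Ico (0 : ℝ) T, μ t = 0) (hν0 : ν 0 ≠ 0) :
    (∀ t ∈ Set.Ico (0 : ℝ) T, ν t ≠ 0) ∧
      StrictAntiOn (fun t => ν t ^ 2 / (β t * γ t)) (Set.Ico 0 T) :=
  systemA_epsilon_strictAnti_general T α β γ μ ν h hμ hν0
end

section
/- Let α, β, γ, μ, ν be an admissible solution of System A on [0,∞) with μ ≡ 0 and ν(0) ≠ 0. Then there exists t₀ ≥ 0 such that either β(t) > α(t) for all t > t₀, or β(t) < α(t) for all t > t₀. -/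
/-!
Where `β = α` the equations give `(β - α)' = 4α²ν²/(βγ - τ)² > 0`, so `β - α` can only cross
zero upwards: once `β ≥ α` at some time, `β > α` at every later time. This needs `ν ≠ 0`, which
persists for all time since `ν' = c(t) ν` is linear in `ν`, and by backward uniqueness a solution
vanishing at some `T` vanishes on `[0, T]`.
-/

open Set Topology

theorem eqOn_zero_of_hasDerivWithinAt_mul_of_right_eq_zero {y c : ℝ → ℝ} {a b : ℝ}
    (hc : ContinuousOn c (Icc a b)) (hy : ContinuousOn y (Icc a b))
    (hy' : ∀ t ∈ Ioc a b, HasDerivWithinAt y (c t * y t) (Iic t) t) (hb : y b = 0) :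
    EqOn y 0 (Icc a b) := by
  obtain ⟨C, hC⟩ := isCompact_Icc.exists_bound_of_continuousOn hc
  have hlip : ∀ t ∈ Ioc a b, LipschitzOnWith C.toNNReal (c t * ·) univ := fun t ht =>
    ((lipschitzWith_smul (c t)).weaken (by
      rw [← NNReal.coe_le_coe, coe_nnnorm, Real.coe_toNNReal']
      exact (hC t (Ioc_subset_Icc_self ht)).trans (le_max_left _ _))).lipschitzOnWith
  exact ODE_solution_unique_of_mem_Icc_left hlip hy hy' (fun _ _ => mem_univ _)
    continuousOn_const
    (fun t _ => by rw [Pi.zero_apply, mul_zero]; exact hasDerivWithinAt_const t _ 0)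
    (fun _ _ => mem_univ _) hb

theorem pos_of_deriv_pos_at_zeros {g g' : ℝ → ℝ} {a : ℝ}
    (hg : ∀ t ∈ Ici a, HasDerivWithinAt g (g' t) (Ici a) t)
    (hzero : ∀ t ∈ Ici a, g t = 0 → 0 < g' t) (ha : 0 ≤ g a) {t : ℝ} (hat : a < t) :
    0 < g t := by
  have hnonneg : ∀ s ∈ Ici a, 0 ≤ g s := fun s hs => by
    have hcont : ContinuousOn g (Icc a s) := fun x hx =>
      (hg x hx.1).continuousWithinAt.mono Icc_subset_Ici_self
    simpa using image_le_of_deriv_right_lt_deriv_boundary' (f := fun x => -g x) (B := 0)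
      hcont.neg (fun x hx => ((hg x hx.1).mono (Ici_subset_Ici.2 hx.1)).neg) (by simpa)
      continuousOn_const (fun x _ => hasDerivWithinAt_const x _ 0)
      (fun x hx hgx => by simpa using hzero x hx.1 (neg_eq_zero.1 hgx)) ⟨hs, le_rfl⟩
  refine (hnonneg t hat.le).lt_of_ne fun hgt => ?_
  have hmin : IsLocalMin g t := Filter.mem_of_superset (Ici_mem_nhds hat) fun s hs => by
    simpa [← hgt] using hnonneg s hs
  exact (hzero t hat.le hgt.symm).ne'
    (hmin.hasDerivAt_eq_zero ((hg t hat.le).hasDerivAt (Ici_mem_nhds hat)))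

namespace IsAdmissibleSolutionA

variable {α β γ μ ν : ℝ → ℝ} {s : Set ℝ}

theorem continuousOn (h : IsAdmissibleSolutionA α β γ μ ν s) :
    ContinuousOn α s ∧ ContinuousOn β s ∧ ContinuousOn γ s ∧ ContinuousOn μ s ∧
      ContinuousOn ν s := by
  refine ⟨fun t ht => ?_, fun t ht => ?_, fun t ht => ?_, fun t ht => ?_, fun t ht => ?_⟩ <;>
  obtain ⟨-, -, -, -, hα, hβ, hγ, hμ, hν⟩ := h t ht
  exacts [hα.continuousWithinAt, hβ.continuousWithinAt, hγ.continuousWithinAt,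
    hμ.continuousWithinAt, hν.continuousWithinAt]

theorem nu_ne_zero (h : IsAdmissibleSolutionA α β γ μ ν (Ici 0)) (hν0 : ν 0 ≠ 0) {T : ℝ}
    (hT : 0 ≤ T) : ν T ≠ 0 := by
  intro hνT
  obtain ⟨hα, hβ, hγ, hμ, hν⟩ := h.continuousOn
  set c : ℝ → ℝ := fun t => -(α t ^ 2 + β t ^ 2) / (α t * (β t * γ t - (μ t ^ 2 + ν t ^ 2)))
  have hc : ContinuousOn c (Ici 0) := by
    refine ((hα.pow 2).add (hβ.pow 2)).neg.div
      (hα.mul ((hβ.mul hγ).sub ((hμ.pow 2).add (hν.pow 2)))) fun t ht => ?_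
    obtain ⟨hαt, -, -, hτ, -⟩ := h t ht
    exact mul_ne_zero hαt.ne' (sub_pos.2 hτ).ne'
  refine hν0 (eqOn_zero_of_hasDerivWithinAt_mul_of_right_eq_zero (hc.mono Icc_subset_Ici_self)
    (hν.mono Icc_subset_Ici_self) (fun t ht => ?_) hνT ⟨le_rfl, hT⟩)
  obtain ⟨-, -, -, -, -, -, -, -, hν'⟩ := h t ht.1.le
  exact ((hν'.hasDerivAt (Ici_mem_nhds ht.1)).hasDerivWithinAt).congr_deriv (by ring)

theorem exists_hasDerivWithinAt_sub_pos_of_eq (h : IsAdmissibleSolutionA α β γ μ ν s) :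
    ∃ G : ℝ → ℝ, (∀ t ∈ s, HasDerivWithinAt (fun t => β t - α t) (G t) s t) ∧
      ∀ t ∈ s, β t = α t → ν t ≠ 0 → 0 < G t := by
  refine ⟨fun t => β t / α t * ((α t ^ 2 - β t ^ 2) / (β t * γ t - (μ t ^ 2 + ν t ^ 2))) -
      (2 * (β t ^ 2 - α t ^ 2) / (β t * γ t - (μ t ^ 2 + ν t ^ 2)) -
        4 * α t ^ 2 * ν t ^ 2 / (β t * γ t - (μ t ^ 2 + ν t ^ 2)) ^ 2),
    fun t ht => ?_, fun t ht hβα hνt => ?_⟩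
  · obtain ⟨-, -, -, -, hα', hβ', -⟩ := h t ht
    exact hβ'.sub hα'
  · obtain ⟨hαt, -, -, hτ, -⟩ := h t ht
    simp only [hβα, sub_self, zero_div, mul_zero, zero_sub, neg_neg]
    have hD : 0 < α t * γ t - (μ t ^ 2 + ν t ^ 2) := by rw [← hβα]; linarith
    positivity

end IsAdmissibleSolutionA

theorem systemA_eventual_sign_beta_sub_alpha_general (α β γ μ ν : ℝ → ℝ)
    (h : IsAdmissibleSolutionA α β γ μ ν (Set.Ici 0))
    (hν0 : ν 0 ≠ 0) :
    ∃ t₀ : ℝ, 0 ≤ t₀ ∧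
      ((∀ t > t₀, α t < β t) ∨ (∀ t > t₀, β t < α t)) := by
  obtain ⟨G, hG, hGpos⟩ := h.exists_hasDerivWithinAt_sub_pos_of_eq
  by_cases hcross : ∃ t₁, 0 ≤ t₁ ∧ α t₁ ≤ β t₁
  · obtain ⟨t₁, ht₁, hαβ⟩ := hcross
    exact ⟨t₁, ht₁, Or.inl fun t ht => sub_pos.1 <| pos_of_deriv_pos_at_zeros
      (fun s hs => (hG s (ht₁.trans hs)).mono (Ici_subset_Ici.2 ht₁))
      (fun s hs hzero => hGpos s (ht₁.trans hs) (sub_eq_zero.1 hzero)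
        (h.nu_ne_zero hν0 (ht₁.trans hs))) (sub_nonneg.2 hαβ) ht⟩
  · exact ⟨0, le_rfl, Or.inr fun t ht => not_le.1 fun hle => hcross ⟨t, ht.le, hle⟩⟩

/-- For an admissible solution of System A on `[0,∞)` with `μ ≡ 0` and `ν(0) ≠ 0`,
there is a time `t₀ ≥ 0` after which either `β > α` always, or `β < α` always. -/
theorem systemA_eventual_sign_beta_sub_alpha (α β γ μ ν : ℝ → ℝ)
    (h : IsAdmissibleSolutionA α β γ μ ν (Set.Ici 0))
    (hμ : ∀ t ∈ Set.Ici (0 : ℝ), μ t = 0) (hν0 : ν 0 ≠ 0) :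
    ∃ t₀ : ℝ, 0 ≤ t₀ ∧
      ((∀ t > t₀, α t < β t) ∨ (∀ t > t₀, β t < α t)) :=
  systemA_eventual_sign_beta_sub_alpha_general α β γ μ ν h hν0
end

section
/- Let α, β, γ, μ, ν be an admissible solution of System A on [0,∞) with μ ≡ 0 and ν(0) ≠ 0. Then the ratio x(t) := β(t)/α(t) converges, as t → ∞, to a constant x_∞ with 0 < x_∞ < ∞. -/
open Set Filter Topology Real

theorem eventually_slope_max_lt {G H : ℝ → ℝ} {G' H' x r : ℝ}
    (hG : HasDerivWithinAt G G' (Ioi x) x) (hH : HasDerivWithinAt H H' (Ioi x) x)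
    (hHG : H x ≤ G x) (hG' : G' < r) (hH' : H x = G x → H' < r) :
    ∀ᶠ z in 𝓝[>] x, slope (fun t => max (G t) (H t)) x z < r := by
  have hGs : ∀ᶠ z in 𝓝[>] x, slope G x z < r :=
    ((hasDerivWithinAt_iff_tendsto_slope' self_notMem_Ioi).1 hG).eventually_lt_const hG'
  rcases hHG.lt_or_eq with hlt | heq
  · have hHG_near : ∀ᶠ z in 𝓝[>] x, H z < G z :=
      hH.continuousWithinAt.eventually_lt hG.continuousWithinAt hlt
    filter_upwards [hGs, hHG_near] with z hGz hHGz
    simpa only [slope_def_field, max_eq_left hHGz.le, max_eq_left hHG] using hGz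
  · have hHs : ∀ᶠ z in 𝓝[>] x, slope H x z < r :=
      ((hasDerivWithinAt_iff_tendsto_slope' self_notMem_Ioi).1 hH).eventually_lt_const (hH' heq)
    filter_upwards [hGs, hHs, self_mem_nhdsWithin] with z hGz hHz (hxz : x < z)
    have hslope : slope (fun t => max (G t) (H t)) x z = max (slope G x z) (slope H x z) := by
      simp only [slope_def_field, heq, max_self, max_div_div_right (sub_pos.2 hxz).le,
        max_sub_sub_right]
    exact hslope ▸ max_lt hGz hHz

theorem antitoneOn_max_of_hasDerivWithinAt {G H G' H' : ℝ → ℝ} {c : ℝ}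
    (hG : ∀ t ∈ Ici c, HasDerivWithinAt G (G' t) (Ici c) t)
    (hH : ∀ t ∈ Ici c, HasDerivWithinAt H (H' t) (Ici c) t)
    (hG' : ∀ t ∈ Ici c, H t ≤ G t → G' t ≤ 0) (hH' : ∀ t ∈ Ici c, G t ≤ H t → H' t ≤ 0) :
    AntitoneOn (fun t => max (G t) (H t)) (Ici c) := by
  intro a ha b _ hab
  have hsub : Icc a b ⊆ Ici c := fun z hz => le_trans ha hz.1
  have hGc : ContinuousOn G (Ici c) := fun t ht => (hG t ht).continuousWithinAt
  have hHc : ContinuousOn H (Ici c) := fun t ht => (hH t ht).continuousWithinAt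
  refine image_le_of_liminf_slope_right_le_deriv_boundary ((hGc.sup hHc).mono hsub)
    (B := fun _ => max (G a) (H a)) (B' := fun _ => 0) le_rfl continuousOn_const
    (fun x _ => hasDerivWithinAt_const x _ _) ?_ ⟨hab, le_rfl⟩
  intro x hx r (hr : 0 < r)
  have hxc : x ∈ Ici c := hsub (Ico_subset_Icc_self hx)
  have hIoi : Ioi x ⊆ Ici c := fun z hz => show c ≤ z from le_trans hxc (le_of_lt hz)
  have hGx := (hG x hxc).mono hIoi
  have hHx := (hH x hxc).mono hIoi
  refine Eventually.frequently ?_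
  rcases le_total (H x) (G x) with hle | hle
  · exact eventually_slope_max_lt hGx hHx hle (by linarith [hG' x hxc hle])
      fun he => by linarith [hH' x hxc he.ge]
  · rw [show (fun t => max (G t) (H t)) = fun t => max (H t) (G t) from
      funext fun t => max_comm _ _]
    exact eventually_slope_max_lt hHx hGx hle (by linarith [hH' x hxc hle])
      fun he => by linarith [hG' x hxc he.ge]

theorem AntitoneOn.exists_tendsto_atTop {α : Type*} [ConditionallyCompleteLinearOrder α]
    [TopologicalSpace α] [OrderTopology α] {f : ℝ → α} {c : ℝ} (hf : AntitoneOn f (Ici c))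
    (hbdd : BddBelow (f '' Ici c)) : ∃ L, Tendsto f atTop (𝓝 L) := by
  have hanti : Antitone fun t => f (max t c) := fun s t hst =>
    hf (le_max_right s c) (le_max_right t c) (max_le_max_right c hst)
  have hbdd' : BddBelow (range fun t => f (max t c)) :=
    hbdd.mono (range_subset_iff.2 fun t => mem_image_of_mem f (le_max_right t c))
  refine ⟨_, (tendsto_atTop_ciInf hanti hbdd').congr' ?_⟩
  filter_upwards [eventually_ge_atTop c] with t ht
  rw [max_eq_left ht]

theorem exists_tendsto_of_tendsto_abs {u : ℝ → ℝ} {c ℓ : ℝ} (hu : ContinuousOn u (Ici c))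
    (habs : Tendsto (fun t => |u t|) atTop (𝓝 ℓ)) : ∃ L, Tendsto u atTop (𝓝 L) := by
  rcases (ge_of_tendsto' habs fun t => abs_nonneg (u t)).eq_or_lt with rfl | hℓ
  · exact ⟨0, (tendsto_zero_iff_abs_tendsto_zero u).2 habs⟩
  obtain ⟨T, hT⟩ := eventually_atTop.1 ((habs.eventually_const_lt hℓ).and (eventually_ge_atTop c))
  have hTc : Ici T ⊆ Ici c := fun t ht => (hT t ht).2
  -- on `[T, ∞)` the function `u` has no zero, so it has constant sign there
  rcases isPreconnected_Ici.eq_or_eq_neg_of_sq_eq (hu.mono hTc) (hu.abs.mono hTc)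
      (fun t _ => (sq_abs (u t)).symm) (fun ht => (hT _ ht).1.ne') with hpos | hneg
  · exact ⟨ℓ, habs.congr' (eventuallyEq_of_mem (Ici_mem_atTop T) hpos).symm⟩
  · exact ⟨-ℓ, habs.neg.congr' (eventuallyEq_of_mem (Ici_mem_atTop T) hneg).symm⟩

noncomputable def logRatio (α β : ℝ → ℝ) (t : ℝ) : ℝ := log (β t / α t)

noncomputable def twistRatio (β γ ν : ℝ → ℝ) (t : ℝ) : ℝ := ν t ^ 2 / (β t * γ t - ν t ^ 2)

noncomputable def lyapunov (α β γ ν : ℝ → ℝ) (t : ℝ) : ℝ :=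
  |logRatio α β t| + 2 * twistRatio β γ ν t

theorem lyapunov_deriv_nonpos_of_one_le {A E X : ℝ} (hA : 0 ≤ A) (hE : 0 ≤ E) (hX : 1 ≤ X) :
    A * (3 * (1 - X ^ 2) + 4 * E) + 2 * -(A * E * (2 * (X - 1) ^ 2 + 2 + 4 * E)) ≤ 0 := by
  have : 3 * (1 - X ^ 2) - 4 * E * (X - 1) ^ 2 - 8 * E ^ 2 ≤ 0 := by
    nlinarith [mul_nonneg hE (sq_nonneg (X - 1)), sq_nonneg E]
  nlinarith [mul_nonpos_of_nonneg_of_nonpos hA this]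

theorem lyapunov_deriv_nonpos_of_le_one {A E X : ℝ} (hA : 0 ≤ A) (hE : 0 ≤ E) (hX₀ : 0 ≤ X)
    (hX : X ≤ 1) :
    -(A * (3 * (1 - X ^ 2) + 4 * E)) + 2 * -(A * E * (2 * (X - 1) ^ 2 + 2 + 4 * E)) ≤ 0 := by
  have : 3 * (X ^ 2 - 1) - 4 * E * (X - 1) ^ 2 - 8 * E - 8 * E ^ 2 ≤ 0 := by
    nlinarith [mul_nonneg hE (sq_nonneg (X - 1)), sq_nonneg E, mul_nonneg (sub_nonneg.2 hX) hX₀]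
  nlinarith [mul_nonpos_of_nonneg_of_nonpos hA this]

namespace IsAdmissibleSolutionA

variable {α β γ μ ν : ℝ → ℝ} {s : Set ℝ} {t : ℝ}

theorem sub_nu_sq_pos (h : IsAdmissibleSolutionA α β γ μ ν s) (ht : t ∈ s) :
    0 < β t * γ t - ν t ^ 2 := by
  obtain ⟨-, -, -, hτ, -⟩ := h t ht
  nlinarith [sq_nonneg (μ t)]

theorem twistRatio_nonneg (h : IsAdmissibleSolutionA α β γ μ ν s) (ht : t ∈ s) :
    0 ≤ twistRatio β γ ν t :=
  div_nonneg (sq_nonneg _) (h.sub_nu_sq_pos ht).le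

theorem lyapunov_nonneg (h : IsAdmissibleSolutionA α β γ μ ν s) (ht : t ∈ s) :
    0 ≤ lyapunov α β γ ν t := by
  have := h.twistRatio_nonneg ht
  unfold lyapunov
  positivity

theorem hasDerivWithinAt_logRatio (h : IsAdmissibleSolutionA α β γ μ ν s)
    (hμ : ∀ t ∈ s, μ t = 0) (ht : t ∈ s) :
    HasDerivWithinAt (logRatio α β) (α t / (β t * γ t - ν t ^ 2) *
      (3 * (1 - (β t / α t) ^ 2) + 4 * twistRatio β γ ν t)) s t := by
  obtain ⟨hα, hβ, -, hτ, hα', hβ', -⟩ := h t ht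
  rw [hμ t ht, zero_pow two_ne_zero, zero_add] at hτ hα' hβ'
  have hD : β t * γ t - ν t ^ 2 ≠ 0 := (sub_pos.2 hτ).ne'
  refine ((hβ'.div hα' hα.ne').log (div_pos hβ hα).ne').congr_deriv ?_
  simp only [twistRatio, Pi.div_apply]
  field_simp
  ring

theorem hasDerivWithinAt_twistRatio (h : IsAdmissibleSolutionA α β γ μ ν s)
    (hμ : ∀ t ∈ s, μ t = 0) (ht : t ∈ s) :
    HasDerivWithinAt (twistRatio β γ ν) (-(α t / (β t * γ t - ν t ^ 2) * twistRatio β γ ν t *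
      (2 * (β t / α t - 1) ^ 2 + 2 + 4 * twistRatio β γ ν t))) s t := by
  obtain ⟨hα, -, -, hτ, -, hβ', hγ', -, hν'⟩ := h t ht
  rw [hμ t ht, zero_pow two_ne_zero, zero_add] at hτ hβ' hγ' hν'
  have hD : β t * γ t - ν t ^ 2 ≠ 0 := (sub_pos.2 hτ).ne'
  refine ((hν'.pow 2).div ((hβ'.mul hγ').sub (hν'.pow 2)) hD).congr_deriv ?_
  simp only [twistRatio, Pi.mul_apply, Pi.sub_apply, Pi.pow_apply]
  field_simp
  ring

theorem antitoneOn_twistRatio {c : ℝ} (h : IsAdmissibleSolutionA α β γ μ ν (Ici c))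
    (hμ : ∀ t ∈ Ici c, μ t = 0) : AntitoneOn (twistRatio β γ ν) (Ici c) := by
  have hderiv t (ht : t ∈ Ici c) := h.hasDerivWithinAt_twistRatio hμ ht
  refine antitoneOn_of_hasDerivWithinAt_nonpos (convex_Ici c)
    (fun t ht => (hderiv t ht).continuousWithinAt)
    (fun t ht => (hderiv t (interior_subset ht)).mono interior_subset) fun t ht => ?_
  replace ht := interior_subset ht
  have hA : 0 ≤ α t / (β t * γ t - ν t ^ 2) := div_nonneg (h t ht).1.le (h.sub_nu_sq_pos ht).le
  have hE := h.twistRatio_nonneg ht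
  exact neg_nonpos.2 (mul_nonneg (mul_nonneg hA hE) (by nlinarith [sq_nonneg (β t / α t - 1)]))

theorem antitoneOn_lyapunov {c : ℝ} (h : IsAdmissibleSolutionA α β γ μ ν (Ici c))
    (hμ : ∀ t ∈ Ici c, μ t = 0) : AntitoneOn (lyapunov α β γ ν) (Ici c) := by
  have hmax : lyapunov α β γ ν = fun t => max (logRatio α β t + 2 * twistRatio β γ ν t)
      (-logRatio α β t + 2 * twistRatio β γ ν t) :=
    funext fun t => by rw [max_add_add_right, ← abs_eq_max_neg, lyapunov]
  rw [hmax]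
  have hu t (ht : t ∈ Ici c) := h.hasDerivWithinAt_logRatio hμ ht
  have hF t (ht : t ∈ Ici c) := (h.hasDerivWithinAt_twistRatio hμ ht).const_mul 2
  refine antitoneOn_max_of_hasDerivWithinAt (fun t ht => (hu t ht).add (hF t ht))
    (fun t ht => (hu t ht).neg.add (hF t ht)) (fun t ht hHG => ?_) (fun t ht hGH => ?_)
  all_goals
    obtain ⟨hα, hβ, -⟩ := h t ht
    have hA : 0 ≤ α t / (β t * γ t - ν t ^ 2) := div_nonneg hα.le (h.sub_nu_sq_pos ht).le
  · exact lyapunov_deriv_nonpos_of_one_le hA (h.twistRatio_nonneg ht)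
      ((log_nonneg_iff (div_pos hβ hα)).1 (show 0 ≤ logRatio α β t by linarith))
  · exact lyapunov_deriv_nonpos_of_le_one hA (h.twistRatio_nonneg ht) (div_pos hβ hα).le
      ((log_nonpos_iff (div_pos hβ hα).le).1 (show logRatio α β t ≤ 0 by linarith))

end IsAdmissibleSolutionA

theorem systemA_ratio_converges_general (α β γ μ ν : ℝ → ℝ)
    (h : IsAdmissibleSolutionA α β γ μ ν (Set.Ici 0))
    (hμ : ∀ t ∈ Set.Ici (0 : ℝ), μ t = 0) :
    ∃ xInf : ℝ, 0 < xInf ∧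
      Filter.Tendsto (fun t => β t / α t) Filter.atTop (nhds xInf) := by
  obtain ⟨LV, hLV⟩ := (h.antitoneOn_lyapunov hμ).exists_tendsto_atTop
    ⟨0, forall_mem_image.2 fun t ht => h.lyapunov_nonneg ht⟩
  obtain ⟨LF, hLF⟩ := (h.antitoneOn_twistRatio hμ).exists_tendsto_atTop
    ⟨0, forall_mem_image.2 fun t ht => h.twistRatio_nonneg ht⟩
  have habs : Tendsto (fun t => |logRatio α β t|) atTop (𝓝 (LV - 2 * LF)) :=
    (hLV.sub (hLF.const_mul 2)).congr fun t => add_sub_cancel_right _ _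
  obtain ⟨L, hL⟩ := exists_tendsto_of_tendsto_abs
    (fun t ht => (h.hasDerivWithinAt_logRatio hμ ht).continuousWithinAt) habs
  refine ⟨exp L, exp_pos L, ((continuous_exp.tendsto L).comp hL).congr' ?_⟩
  filter_upwards [eventually_ge_atTop 0] with t ht
  exact exp_log (div_pos (h t ht).2.1 (h t ht).1)

/-- For an admissible solution of System A on `[0,∞)` with `μ ≡ 0` and `ν(0) ≠ 0`,
the ratio `x(t) := β(t)/α(t)` converges as `t → ∞` to a constant `x_∞ ∈ (0, ∞)`. -/
theorem systemA_ratio_converges (α β γ μ ν : ℝ → ℝ)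
    (h : IsAdmissibleSolutionA α β γ μ ν (Set.Ici 0))
    (hμ : ∀ t ∈ Set.Ici (0 : ℝ), μ t = 0) (hν0 : ν 0 ≠ 0) :
    ∃ xInf : ℝ, 0 < xInf ∧
      Filter.Tendsto (fun t => β t / α t) Filter.atTop (nhds xInf) :=
  systemA_ratio_converges_general α β γ μ ν h hμ
end

section
/- Let 𝔯 be a 3-dimensional solvable real Lie algebra with basis (c₁, c₂, c₃). Suppose D_E, D_F, D_G : 𝔯 → 𝔯 are Lie algebra derivations of 𝔯 satisfying D_E c₁ = −c₂, D_E c₂ = c₁, D_E c₃ = 0, D_F c₁ = −c₃, D_F c₂ = 0, D_F c₃ = c₁, D_G c₁ = 0, D_G c₂ = −c₃, D_G c₃ = c₂. Then 𝔯 is abelian: [x, y] = 0 for all x, y ∈ 𝔯. -/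
/-!
The derived algebra `⁅𝔯, 𝔯⁆` is invariant under every derivation, so it is a subrepresentation
of the standard representation of `𝔰𝔬(3)` on `𝔯`. That representation is irreducible: for `x` in
an invariant subspace, `x + E² x`, `x + F² x` and `x + G² x` are the components of `x` along
`c₃`, `c₂` and `c₁`. Solvability rules out `⁅𝔯, 𝔯⁆ = 𝔯`, hence `⁅𝔯, 𝔯⁆ = 0`.
-/

open LieAlgebra

theorem LieDerivation.derivedSeries_one_mem_invtSubmodule {R L : Type*} [CommRing R] [LieRing L]
    [LieAlgebra R L] (D : LieDerivation R L L) :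
    (derivedSeries R L 1).toSubmodule ∈ Module.End.invtSubmodule (D : Module.End R L) := by
  rw [Module.End.mem_invtSubmodule, derivedSeries_def, derivedSeriesOfIdeal_succ,
    derivedSeriesOfIdeal_zero]
  conv_lhs => rw [LieSubmodule.lieIdeal_oper_eq_linear_span]
  rw [Submodule.span_le]
  rintro - ⟨x, y, rfl⟩
  rw [SetLike.mem_coe, Submodule.mem_comap, LieDerivation.coeFn_coe, D.apply_lie_eq_add]
  exact add_mem (LieSubmodule.lie_mem_lie x.2 (LieSubmodule.mem_top _))
    (LieSubmodule.lie_mem_lie (LieSubmodule.mem_top _) y.2)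

structure IsStandardSO3Action {K V : Type*} [Field K] [AddCommGroup V] [Module K V]
    (b : Module.Basis (Fin 3) K V) (E F G : Module.End K V) : Prop where
  E₀ : E (b 0) = -b 1
  E₁ : E (b 1) = b 0
  E₂ : E (b 2) = 0
  F₀ : F (b 0) = -b 2
  F₁ : F (b 1) = 0
  F₂ : F (b 2) = b 0
  G₀ : G (b 0) = 0
  G₁ : G (b 1) = -b 2
  G₂ : G (b 2) = b 1

namespace IsStandardSO3Action

variable {K V : Type*} [Field K] [AddCommGroup V] [Module K V] {b : Module.Basis (Fin 3) K V}
  {E F G : Module.End K V}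

lemma add_E_E (h : IsStandardSO3Action b E F G) (x : V) : x + E (E x) = b.repr x 2 • b 2 := by
  conv_lhs => rw [← b.sum_repr x]
  simp only [Fin.sum_univ_three, map_add, map_smul, h.E₀, h.E₁, h.E₂, map_neg, map_zero]
  module

lemma add_F_F (h : IsStandardSO3Action b E F G) (x : V) : x + F (F x) = b.repr x 1 • b 1 := by
  conv_lhs => rw [← b.sum_repr x]
  simp only [Fin.sum_univ_three, map_add, map_smul, h.F₀, h.F₁, h.F₂, map_neg, map_zero]
  module

lemma add_G_G (h : IsStandardSO3Action b E F G) (x : V) : x + G (G x) = b.repr x 0 • b 0 := by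
  conv_lhs => rw [← b.sum_repr x]
  simp only [Fin.sum_univ_three, map_add, map_smul, h.G₀, h.G₁, h.G₂, map_neg, map_zero]
  module

variable {W : Submodule K V}

lemma basis_zero_mem_of_repr_ne_zero (h : IsStandardSO3Action b E F G) (hE : W ∈ E.invtSubmodule)
    (hF : W ∈ F.invtSubmodule) (hG : W ∈ G.invtSubmodule) {x : V} (hx : x ∈ W) {i : Fin 3}
    (hi : b.repr x i ≠ 0) : b 0 ∈ W := by
  fin_cases i <;> dsimp only [Fin.reduceFinMk] at hi
  · rw [← W.smul_mem_iff hi, ← h.add_G_G]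
    exact add_mem hx (hG (hG hx))
  · have hb₁ : b 1 ∈ W := by
      rw [← W.smul_mem_iff hi, ← h.add_F_F]
      exact add_mem hx (hF (hF hx))
    simpa only [Submodule.mem_comap, h.E₁] using hE hb₁
  · have hb₂ : b 2 ∈ W := by
      rw [← W.smul_mem_iff hi, ← h.add_E_E]
      exact add_mem hx (hE (hE hx))
    simpa only [Submodule.mem_comap, h.F₂] using hF hb₂

lemma eq_top_of_basis_zero_mem (h : IsStandardSO3Action b E F G) (hE : W ∈ E.invtSubmodule)
    (hF : W ∈ F.invtSubmodule) (hb₀ : b 0 ∈ W) : W = ⊤ := by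
  have hb₁ : b 1 ∈ W := by simpa only [Submodule.mem_comap, h.E₀, neg_mem_iff] using hE hb₀
  have hb₂ : b 2 ∈ W := by simpa only [Submodule.mem_comap, h.F₀, neg_mem_iff] using hF hb₀
  rw [eq_top_iff, ← b.span_eq, Submodule.span_le, Set.range_subset_iff]
  intro i
  fin_cases i
  exacts [hb₀, hb₁, hb₂]

theorem eq_bot_or_eq_top (h : IsStandardSO3Action b E F G) (hE : W ∈ E.invtSubmodule)
    (hF : W ∈ F.invtSubmodule) (hG : W ∈ G.invtSubmodule) : W = ⊥ ∨ W = ⊤ := by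
  refine or_iff_not_imp_left.mpr fun hW => ?_
  obtain ⟨x, hx, hx₀⟩ := W.exists_mem_ne_zero_of_ne_bot hW
  obtain ⟨i, hi⟩ : ∃ i, b.repr x i ≠ 0 := by
    by_contra! hrepr
    exact hx₀ (b.ext_elem_iff.mpr (by simpa using hrepr))
  exact h.eq_top_of_basis_zero_mem hE hF (h.basis_zero_mem_of_repr_ne_zero hE hF hG hx hi)

end IsStandardSO3Action

/-- Let `𝔯` be a 3-dimensional solvable real Lie algebra with basis `(c₁, c₂, c₃)`
(`b 0 = c₁`, `b 1 = c₂`, `b 2 = c₃`), and let `D_E, D_F, D_G` be derivations of `𝔯`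
acting on the basis as the standard basis `E, F, G` of `𝔰𝔬(3)` does in its unique
irreducible 3-dimensional representation. Then `𝔯` is abelian. -/
theorem solvable_with_so3_derivations_is_abelian
    (L : Type) [LieRing L] [LieAlgebra ℝ L] [LieAlgebra.IsSolvable L]
    (b : Module.Basis (Fin 3) ℝ L)
    (DE DF DG : LieDerivation ℝ L L)
    (hE1 : DE (b 0) = -b 1) (hE2 : DE (b 1) = b 0) (hE3 : DE (b 2) = 0)
    (hF1 : DF (b 0) = -b 2) (hF2 : DF (b 1) = 0) (hF3 : DF (b 2) = b 0)
    (hG1 : DG (b 0) = 0) (hG2 : DG (b 1) = -b 2) (hG3 : DG (b 2) = b 1) :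
    ∀ x y : L, ⁅x, y⁆ = 0 := by
  intro x y
  have hso3 : IsStandardSO3Action b (DE : Module.End ℝ L) DF DG :=
    ⟨hE1, hE2, hE3, hF1, hF2, hF3, hG1, hG2, hG3⟩
  have : Nontrivial L := nontrivial_of_ne (b 0) 0 (b.ne_zero 0)
  have hxy : ⁅x, y⁆ ∈ derivedSeries ℝ L 1 :=
    LieSubmodule.lie_mem_lie (LieSubmodule.mem_top x) (LieSubmodule.mem_top y)
  rcases hso3.eq_bot_or_eq_top DE.derivedSeries_one_mem_invtSubmodule
      DF.derivedSeries_one_mem_invtSubmodule DG.derivedSeries_one_mem_invtSubmodule with h | h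
  · rw [LieSubmodule.toSubmodule_eq_bot] at h
    rwa [h, LieSubmodule.mem_bot] at hxy
  · rw [LieSubmodule.toSubmodule_eq_top] at h
    exact absurd h (derivedSeries_lt_top_of_solvable ℝ L).ne
end

section
/- Let α, β, γ > 0 and μ, ν ∈ ℝ with τ := μ² + ν² > 0 and βγ > τ. Define λ_± = (β+γ)/2 ± (1/2)√(4τ + (β−γ)²), the vectors H_± = (0, λ_±−γ, 0, μ, ν)ᵀ and B_± = (0, 0, λ_±−γ, −ν, μ)ᵀ in ℝ⁵, the scalars f_± = √(λ_±·(τ + (λ_±−γ)²)), and e₁ = (1,0,0,0,0)ᵀ. Then g(α,β,γ,μ,ν)·H_± = λ_±·H_±, g(α,β,γ,μ,ν)·B_± = λ_±·B_±, and the five vectors e₁/√α, H₊/f₊, H₋/f₋, B₊/f₊, B₋/f₋ form a basis of ℝ⁵ that is orthonormal with respect to the inner product (u,v) ↦ uᵀ·g(α,β,γ,μ,ν)·v. -/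
/-!
On `H = (0, x, 0, μ, ν)` and `B = (0, 0, x, -ν, μ)` the matrix `g` acts like the block
`[[β, τ], [1, γ]]` on `(x, 1)`, so `H` and `B` with `x = λ - γ` are eigenvectors for `λ` exactly
when `(λ - β)(λ - γ) = τ`. By Vieta `(λ₊ - γ)(λ₋ - γ) = -τ`, which is the Euclidean
orthogonality of `H₊, H₋` and of `B₊, B₋`; all other pairs have disjoint supports or are
visibly orthogonal. Since `u ⬝ g w = λ_w (u ⬝ w)` for an eigenvector `w`, the family is
`g`-orthogonal with `g`-norms² `α` and `λ_± (τ + (λ_± - γ)²) = f_±²`, and these are nonzero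
because `λ₊ λ₋ = βγ - τ > 0`. A `g`-orthonormal family is linearly independent, and five
independent vectors span `ℝ⁵`.
-/

/-- The matrix of the `Ad`-invariant inner product with parameters `α β γ μ ν` in the
ordered basis `(c₃, c₁, c₂, F, G)` (resp. `(A, B, C, D, E)`). -/
def metricMatrix (α β γ μ ν : ℝ) : Matrix (Fin 5) (Fin 5) ℝ :=
  !![α, 0, 0, 0, 0;
     0, β, 0, μ, ν;
     0, 0, β, -ν, μ;
     0, μ, -ν, γ, 0;
     0, ν, μ, 0, γ]

open Matrix

section EigenBasis

variable {K n ι : Type*} [Field K] [Fintype n] [DecidableEq ι]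

theorem Matrix.linearIndependent_of_dotProduct_mulVec_eq_ite [DecidableEq n] {A : Matrix n n K}
    {v : ι → n → K} (h : ∀ i j, v i ⬝ᵥ A *ᵥ v j = if i = j then 1 else 0) : LinearIndependent K v :=
  LinearMap.BilinForm.linearIndependent_of_iIsOrtho (B := Matrix.toBilin' A)
    (LinearMap.BilinForm.iIsOrtho_def.2 fun i j hij => by
      rw [Matrix.toBilin'_apply', h, if_neg hij])
    fun i => by rw [Matrix.toBilin'_apply', h, if_pos rfl]; exact one_ne_zero

theorem Matrix.inv_smul_dotProduct_mulVec_inv_smul_eq_ite {A : Matrix n n K} {w : ι → n → K}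
    {d c : ι → K} (heig : ∀ j, A *ᵥ w j = d j • w j)
    (horth : Pairwise fun i j => w i ⬝ᵥ w j = 0) (hnorm : ∀ i, d i * (w i ⬝ᵥ w i) = c i ^ 2)
    (hc : ∀ i, c i ≠ 0) (i j : ι) :
    (c i)⁻¹ • w i ⬝ᵥ A *ᵥ ((c j)⁻¹ • w j) = if i = j then 1 else 0 := by
  rw [mulVec_smul, heig, smul_dotProduct, dotProduct_smul, dotProduct_smul, smul_eq_mul,
    smul_eq_mul, smul_eq_mul]
  split_ifs with hij
  · subst hij
    rw [hnorm]
    field_simp [hc i]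
  · rw [horth hij]
    simp

end EigenBasis

section MetricMatrix

variable {α β γ μ ν : ℝ}

theorem metricMatrix_mulVec_e₁ :
    metricMatrix α β γ μ ν *ᵥ ![1, 0, 0, 0, 0] = α • ![1, 0, 0, 0, 0] := by
  ext i
  fin_cases i <;> simp [metricMatrix, mulVec, dotProduct, Fin.sum_univ_five]

theorem metricMatrix_mulVec_H {l : ℝ} (hl : (l - β) * (l - γ) = μ ^ 2 + ν ^ 2) :
    metricMatrix α β γ μ ν *ᵥ ![0, l - γ, 0, μ, ν] = l • ![0, l - γ, 0, μ, ν] := by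
  ext i
  fin_cases i <;> simp [metricMatrix, mulVec, dotProduct, Fin.sum_univ_five] <;>
    first | linear_combination -hl | ring

theorem metricMatrix_mulVec_B {l : ℝ} (hl : (l - β) * (l - γ) = μ ^ 2 + ν ^ 2) :
    metricMatrix α β γ μ ν *ᵥ ![0, 0, l - γ, -ν, μ] = l • ![0, 0, l - γ, -ν, μ] := by
  ext i
  fin_cases i <;> simp [metricMatrix, mulVec, dotProduct, Fin.sum_univ_five] <;>
    first | linear_combination -hl | ring

end MetricMatrix

section MetricEigenvectors

variable {α β γ μ ν lP lM : ℝ}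

/-- The family `(e₁, H₊, H₋, B₊, B₋)` for the eigenvalues `λ₊ = lP`, `λ₋ = lM`. -/
def metricEigenvectors (γ μ ν lP lM : ℝ) : Fin 5 → Fin 5 → ℝ :=
  ![![1, 0, 0, 0, 0], ![0, lP - γ, 0, μ, ν], ![0, lM - γ, 0, μ, ν], ![0, 0, lP - γ, -ν, μ],
    ![0, 0, lM - γ, -ν, μ]]

theorem metricMatrix_mulVec_metricEigenvectors (hP : (lP - β) * (lP - γ) = μ ^ 2 + ν ^ 2)
    (hM : (lM - β) * (lM - γ) = μ ^ 2 + ν ^ 2) (j : Fin 5) :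
    metricMatrix α β γ μ ν *ᵥ metricEigenvectors γ μ ν lP lM j =
      ![α, lP, lM, lP, lM] j • metricEigenvectors γ μ ν lP lM j := by
  fin_cases j
  exacts [metricMatrix_mulVec_e₁, metricMatrix_mulVec_H hP, metricMatrix_mulVec_H hM,
    metricMatrix_mulVec_B hP, metricMatrix_mulVec_B hM]

theorem metricEigenvectors_pairwise_dotProduct_eq_zero
    (h : (lP - γ) * (lM - γ) + (μ ^ 2 + ν ^ 2) = 0) :
    Pairwise fun i j =>
      metricEigenvectors γ μ ν lP lM i ⬝ᵥ metricEigenvectors γ μ ν lP lM j = 0 := by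
  intro i j hij
  fin_cases i <;> fin_cases j <;>
    simp [metricEigenvectors, dotProduct, Fin.sum_univ_five] at hij ⊢ <;>
    first | linear_combination h | ring

theorem metricEigenvectors_dotProduct_self (i : Fin 5) :
    metricEigenvectors γ μ ν lP lM i ⬝ᵥ metricEigenvectors γ μ ν lP lM i =
      ![1, μ ^ 2 + ν ^ 2 + (lP - γ) ^ 2, μ ^ 2 + ν ^ 2 + (lM - γ) ^ 2,
        μ ^ 2 + ν ^ 2 + (lP - γ) ^ 2, μ ^ 2 + ν ^ 2 + (lM - γ) ^ 2] i := by
  fin_cases i <;> simp [metricEigenvectors, dotProduct, Fin.sum_univ_five] <;> ring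

end MetricEigenvectors

/-- Diagonalization of the metric `g(α,β,γ,μ,ν)` with `τ := μ² + ν² > 0` and `βγ > τ`:
the vectors `H_± = (0, λ_±−γ, 0, μ, ν)` and `B_± = (0, 0, λ_±−γ, −ν, μ)` are
eigenvectors of `g` for the eigenvalues `λ_± = (β+γ)/2 ± (1/2)√(4τ+(β−γ)²)`, and
`(e₁/√α, H₊/f₊, H₋/f₋, B₊/f₊, B₋/f₋)`, with `f_± = √(λ_±(τ+(λ_±−γ)²))`, is a basis
of `ℝ⁵` orthonormal for the inner product `(u,v) ↦ uᵀ·g·v`. -/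
theorem metric_orthonormal_basis (α β γ μ ν τ lamP lamM fP fM : ℝ)
    (hτ : τ = μ ^ 2 + ν ^ 2)
    (hα : 0 < α) (hβ : 0 < β) (hγ : 0 < γ)
    (hτpos : 0 < τ) (hpd : τ < β * γ)
    (hlamP : lamP = (β + γ) / 2 + Real.sqrt (4 * τ + (β - γ) ^ 2) / 2)
    (hlamM : lamM = (β + γ) / 2 - Real.sqrt (4 * τ + (β - γ) ^ 2) / 2)
    (hfP : fP = Real.sqrt (lamP * (τ + (lamP - γ) ^ 2)))
    (hfM : fM = Real.sqrt (lamM * (τ + (lamM - γ) ^ 2)))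
    (HP HM BP BM e₁ : Fin 5 → ℝ)
    (hHP : HP = ![0, lamP - γ, 0, μ, ν])
    (hHM : HM = ![0, lamM - γ, 0, μ, ν])
    (hBP : BP = ![0, 0, lamP - γ, -ν, μ])
    (hBM : BM = ![0, 0, lamM - γ, -ν, μ])
    (he₁ : e₁ = ![1, 0, 0, 0, 0])
    (v : Fin 5 → Fin 5 → ℝ)
    (hv : v = ![(Real.sqrt α)⁻¹ • e₁, fP⁻¹ • HP, fM⁻¹ • HM, fP⁻¹ • BP, fM⁻¹ • BM]) :
    (metricMatrix α β γ μ ν).mulVec HP = lamP • HP ∧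
    (metricMatrix α β γ μ ν).mulVec HM = lamM • HM ∧
    (metricMatrix α β γ μ ν).mulVec BP = lamP • BP ∧
    (metricMatrix α β γ μ ν).mulVec BM = lamM • BM ∧
    LinearIndependent ℝ v ∧
    Submodule.span ℝ (Set.range v) = ⊤ ∧
    ∀ i j, dotProduct (v i) ((metricMatrix α β γ μ ν).mulVec (v j)) =
      if i = j then 1 else 0 := by
  subst hτ HP HM BP BM e₁
  have hs := Real.sq_sqrt (show 0 ≤ 4 * (μ ^ 2 + ν ^ 2) + (β - γ) ^ 2 by positivity)
  have hrootP : (lamP - β) * (lamP - γ) = μ ^ 2 + ν ^ 2 := by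
    rw [hlamP]; linear_combination hs / 4
  have hrootM : (lamM - β) * (lamM - γ) = μ ^ 2 + ν ^ 2 := by
    rw [hlamM]; linear_combination hs / 4
  have hcross : (lamP - γ) * (lamM - γ) + (μ ^ 2 + ν ^ 2) = 0 := by
    rw [hlamP, hlamM]; linear_combination -hs / 4
  have hlamP_pos : 0 < lamP := by rw [hlamP]; positivity
  have hlamM_pos : 0 < lamM := by
    have hprod : lamP * lamM = β * γ - (μ ^ 2 + ν ^ 2) := by
      rw [hlamP, hlamM]; linear_combination -hs / 4
    exact pos_of_mul_pos_right (hprod ▸ sub_pos.2 hpd) hlamP_pos.le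
  have hc : ∀ i, ![√α, fP, fM, fP, fM] i ≠ 0 := by
    intro i; fin_cases i <;> simp [hfP, hfM] <;> positivity
  have hnorm : ∀ i, ![α, lamP, lamM, lamP, lamM] i *
      (metricEigenvectors γ μ ν lamP lamM i ⬝ᵥ metricEigenvectors γ μ ν lamP lamM i) =
      ![√α, fP, fM, fP, fM] i ^ 2 := by
    intro i; rw [metricEigenvectors_dotProduct_self]
    fin_cases i <;> simp [hfP, hfM, hα.le] <;> exact (Real.sq_sqrt (by positivity)).symm
  have hortho := inv_smul_dotProduct_mulVec_inv_smul_eq_ite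
    (metricMatrix_mulVec_metricEigenvectors hrootP hrootM)
    (metricEigenvectors_pairwise_dotProduct_eq_zero hcross) hnorm hc
  have hv' :
      v = fun i => (![√α, fP, fM, fP, fM] i)⁻¹ • metricEigenvectors γ μ ν lamP lamM i := by
    subst hv; ext i : 1; fin_cases i <;> rfl
  subst hv'
  have hli := linearIndependent_of_dotProduct_mulVec_eq_ite hortho
  refine ⟨metricMatrix_mulVec_H hrootP, metricMatrix_mulVec_H hrootM,
    metricMatrix_mulVec_B hrootP, metricMatrix_mulVec_B hrootM, hli,
    hli.span_eq_top_of_card_eq_finrank (by simp), hortho⟩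
end

section
/- Let 𝔤 be the 6-dimensional real Lie algebra with basis (E, c₃, c₁, c₂, F, G) and brackets [E,c₁] = −c₂, [E,c₂] = c₁, [E,F] = −G, [E,G] = F, [c₃,F] = −c₁, [c₃,G] = −c₂, [c₁,F] = c₃, [c₂,G] = c₃, all other brackets of basis elements (up to antisymmetry) being zero (this is 𝔰𝔬(3)⋉ℝ³). Let p = span(c₃,c₁,c₂,F,G), let π : 𝔤 → p be the projection along span(E), let ⟨·,·⟩ be the inner product on p whose matrix in the basis (c₃,c₁,c₂,F,G) is g(α,β,γ,μ,ν) with βγ > τ := μ²+ν², let B be the Killing form of 𝔤, and for any ⟨·,·⟩-orthonormal basis (X_i) of p define Ric(X,Y) = −(1/2)B(X,Y) − (1/2)∑_i ⟨π[X,X_i], π[Y,X_i]⟩ + (1/4)∑_{i,j} ⟨π[X_i,X_j], X⟩·⟨π[X_i,X_j], Y⟩. Then: Ric(c₃,c₃) = (α²−β²)/(βγ−τ) + 2α²ν²/(βγ−τ)²; Ric(c₁,c₁) = Ric(c₂,c₂) = (β/(2α))·(β²−α²)/(βγ−τ); Ric(F,F) = Ric(G,G) = 2 − β/α + (γ/(2α))·(β²−α²)/(βγ−τ);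 Ric(c₁,F) = Ric(c₂,G) = μ(β²−α²)/(2α(βγ−τ)); and Ric(c₁,G) = −Ric(c₂,F) = ν(α²+β²)/(2α(βγ−τ)). -/
open Matrix

noncomputable section

theorem Matrix.transpose_mul_mul_apply {m ι κ R : Type*} [Fintype m] [CommSemiring R]
    (C : Matrix m ι R) (M : Matrix m m R) (D : Matrix m κ R) (i : ι) (j : κ) :
    (Cᵀ * M * D) i j = Cᵀ i ⬝ᵥ M *ᵥ Dᵀ j := by
  rw [Matrix.mul_assoc]
  simp [mul_apply, dotProduct, mulVec, Finset.mul_sum]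

theorem Matrix.mul_transpose_eq_of_transpose_mul_mul_eq_one {ι R : Type*} [Fintype ι]
    [DecidableEq ι] [CommRing R] {P G Q : Matrix ι ι R} (hP : Pᵀ * G * P = 1) (hGQ : G * Q = 1) :
    P * Pᵀ = Q := by
  have h : P * Pᵀ * G = 1 := by
    rw [Matrix.mul_assoc]
    exact mul_eq_one_comm.mp hP
  calc P * Pᵀ = P * Pᵀ * (G * Q) := by rw [hGQ, Matrix.mul_one]
    _ = Q := by rw [← Matrix.mul_assoc, h, Matrix.one_mul]

theorem killingForm_apply_eq_sum_repr {R L ι : Type*} [CommRing R] [LieRing L] [LieAlgebra R L]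
    [Fintype ι] [DecidableEq ι] (b : Module.Basis ι R L) (x y : L) :
    killingForm R L x y = ∑ k, b.repr ⁅x, ⁅y, b k⁆⁆ k := by
  rw [killingForm_apply_apply, LinearMap.trace_eq_matrix_trace R b]
  simp [trace, LinearMap.toMatrix_apply]

section Coordinates

variable {L : Type*} [LieRing L] [LieAlgebra ℝ L] {n : ℕ} (b : Module.Basis (Fin (n + 1)) ℝ L)

/-- Coordinates of the component in `p = span {b 1, …, b n}`, complementary to `b 0`. -/
def pCoord : L →ₗ[ℝ] Fin n → ℝ :=
  LinearMap.funLeft ℝ ℝ Fin.succ ∘ₗ b.equivFun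

@[simp]
theorem pCoord_apply (z : L) (k : Fin n) : pCoord b z k = b.repr z k.succ := rfl

theorem pCoord_basis_succ (k : Fin n) : pCoord b (b k.succ) = Pi.single k 1 := by
  ext l
  simp [Finsupp.single_apply, Pi.single_apply, eq_comm]

theorem pCoord_sub_smul_basis_zero (z : L) (c : ℝ) : pCoord b (z - c • b 0) = pCoord b z := by
  ext k
  simp

theorem eq_sum_pCoord_smul {z : L} (hz : b.repr z 0 = 0) :
    z = ∑ k, pCoord b z k • b k.succ := by
  have h := b.sum_repr z
  rw [Fin.sum_univ_succ, hz, zero_smul, zero_add] at h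
  exact h.symm

def metricForm (G : Matrix (Fin n) (Fin n) ℝ) (u w : L) : ℝ :=
  pCoord b u ⬝ᵥ G *ᵥ pCoord b w

theorem metricForm_sub_smul_basis_zero_left (G : Matrix (Fin n) (Fin n) ℝ) (u w : L) (c : ℝ) :
    metricForm b G (u - c • b 0) w = metricForm b G u w := by
  rw [metricForm, pCoord_sub_smul_basis_zero, metricForm]

theorem metricForm_sub_smul_basis_zero_right (G : Matrix (Fin n) (Fin n) ℝ) (u w : L) (c : ℝ) :
    metricForm b G u (w - c • b 0) = metricForm b G u w := by
  rw [metricForm, pCoord_sub_smul_basis_zero, metricForm]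

def pAdMatrix (Y : L) : Matrix (Fin n) (Fin n) ℝ :=
  of fun k l => pCoord b ⁅Y, b l.succ⁆ k

def pBracketMatrix (G : Matrix (Fin n) (Fin n) ℝ) (Y : L) : Matrix (Fin n) (Fin n) ℝ :=
  of fun k l => metricForm b G ⁅b k.succ, b l.succ⁆ Y

def coordMatrix {ι : Type*} (X : ι → L) : Matrix (Fin n) ι ℝ :=
  of fun k i => pCoord b (X i) k

theorem pCoord_lie_eq_pAdMatrix_mulVec (Y : L) {z : L} (hz : b.repr z 0 = 0) :
    pCoord b ⁅Y, z⁆ = pAdMatrix b Y *ᵥ pCoord b z := by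
  conv_lhs => rw [eq_sum_pCoord_smul b hz]
  ext k
  simp [lie_sum, mulVec, dotProduct, pAdMatrix, mul_comm]

theorem metricForm_lie_eq (G : Matrix (Fin n) (Fin n) ℝ) (Y : L) {u v : L}
    (hu : b.repr u 0 = 0) (hv : b.repr v 0 = 0) :
    metricForm b G ⁅u, v⁆ Y = pCoord b u ⬝ᵥ pBracketMatrix b G Y *ᵥ pCoord b v := by
  conv_lhs => rw [eq_sum_pCoord_smul b hu, eq_sum_pCoord_smul b hv]
  simp only [metricForm, sum_lie, lie_sum, smul_lie, lie_smul, map_sum, map_smul,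
    sum_dotProduct, smul_dotProduct, smul_eq_mul]
  simp only [dotProduct, mulVec, pBracketMatrix, metricForm, of_apply, Finset.mul_sum]
  rw [Finset.sum_comm]
  refine Finset.sum_congr rfl fun k _ => Finset.sum_congr rfl fun l _ => ?_
  simp only [Finset.mul_sum, Finset.sum_mul]
  ring_nf

theorem pBracketMatrix_basis_succ (G : Matrix (Fin n) (Fin n) ℝ) (m : Fin n) :
    pBracketMatrix b G (b m.succ) = of fun k l => ((pAdMatrix b (b k.succ))ᵀ * G) l m := by
  ext k l
  simp [pBracketMatrix, metricForm, pCoord_basis_succ, mul_apply, pAdMatrix, dotProduct]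

theorem transpose_coordMatrix_mul_mul_apply (G : Matrix (Fin n) (Fin n) ℝ) {ι : Type*}
    (X : ι → L) (i j : ι) :
    ((coordMatrix b X)ᵀ * G * coordMatrix b X) i j = metricForm b G (X i) (X j) :=
  transpose_mul_mul_apply _ _ _ i j

theorem sum_metricForm_lie_lie (G : Matrix (Fin n) (Fin n) ℝ) {ι : Type*} [Fintype ι]
    {X : ι → L} (hX0 : ∀ i, b.repr (X i) 0 = 0) (Y Z : L) :
    ∑ i, metricForm b G ⁅Y, X i⁆ ⁅Z, X i⁆ =
      trace ((pAdMatrix b Y)ᵀ * G * pAdMatrix b Z * (coordMatrix b X * (coordMatrix b X)ᵀ)) := by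
  have hcol : ∀ (W : L) i, pCoord b ⁅W, X i⁆ = (pAdMatrix b W * coordMatrix b X)ᵀ i :=
    fun W i => pCoord_lie_eq_pAdMatrix_mulVec b W (hX0 i)
  calc ∑ i, metricForm b G ⁅Y, X i⁆ ⁅Z, X i⁆
      = trace ((pAdMatrix b Y * coordMatrix b X)ᵀ * G * (pAdMatrix b Z * coordMatrix b X)) := by
        simp only [metricForm, hcol, trace, diag, transpose_mul_mul_apply]
    _ = _ := by
        simp only [transpose_mul, Matrix.mul_assoc]
        rw [trace_mul_comm]
        simp only [Matrix.mul_assoc]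

theorem sum_metricForm_lie_mul (G : Matrix (Fin n) (Fin n) ℝ) {ι : Type*} [Fintype ι]
    {X : ι → L} (hX0 : ∀ i, b.repr (X i) 0 = 0) (Y Z : L) :
    ∑ i, ∑ j, metricForm b G ⁅X i, X j⁆ Y * metricForm b G ⁅X i, X j⁆ Z =
      trace (pBracketMatrix b G Y * (coordMatrix b X * (coordMatrix b X)ᵀ) *
        (pBracketMatrix b G Z)ᵀ * (coordMatrix b X * (coordMatrix b X)ᵀ)) := by
  have hentry : ∀ (W : L) i j, metricForm b G ⁅X i, X j⁆ W =
      ((coordMatrix b X)ᵀ * pBracketMatrix b G W * coordMatrix b X) i j := fun W i j => by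
    rw [metricForm_lie_eq b G W (hX0 i) (hX0 j), transpose_mul_mul_apply]
    rfl
  calc ∑ i, ∑ j, metricForm b G ⁅X i, X j⁆ Y * metricForm b G ⁅X i, X j⁆ Z
      = trace (((coordMatrix b X)ᵀ * pBracketMatrix b G Y * coordMatrix b X) *
          ((coordMatrix b X)ᵀ * pBracketMatrix b G Z * coordMatrix b X)ᵀ) := by
        rw [← sum_hadamard_eq]
        simp only [hadamard_apply, hentry]
    _ = _ := by
        simp only [transpose_mul, transpose_transpose, Matrix.mul_assoc]
        rw [trace_mul_comm]
        simp only [Matrix.mul_assoc]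

end Coordinates

section RicciCoord

variable {n : ℕ}

/-- The matrix of `(u, v) ↦ ⟨π[u, v], e_m⟩` on `p`, when `A k` is the matrix of `π ∘ ad e_k`. -/
def bracketPairing (A : Fin n → Matrix (Fin n) (Fin n) ℝ) (G : Matrix (Fin n) (Fin n) ℝ)
    (m : Fin n) : Matrix (Fin n) (Fin n) ℝ :=
  of fun k l => ((A k)ᵀ * G) l m

def ricciCoord (A : Fin n → Matrix (Fin n) (Fin n) ℝ) (K G Q : Matrix (Fin n) (Fin n) ℝ)
    (m m' : Fin n) : ℝ :=
  -(1 / 2) * K m m' - (1 / 2) * trace ((A m)ᵀ * G * A m' * Q) +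
    (1 / 4) * trace (bracketPairing A G m * Q * (bracketPairing A G m')ᵀ * Q)

theorem besse_ricci_basis_succ_eq_ricciCoord {L : Type*} [LieRing L] [LieAlgebra ℝ L]
    (b : Module.Basis (Fin (n + 1)) ℝ L) {G Q : Matrix (Fin n) (Fin n) ℝ} (hGQ : G * Q = 1)
    {π : L → L} (hπ : ∀ z, π z = z - b.repr z 0 • b 0)
    {X : Fin n → L} (hX0 : ∀ i, b.repr (X i) 0 = 0)
    (hXon : ∀ i j, metricForm b G (X i) (X j) = if i = j then 1 else 0) (m m' : Fin n) :
    -(1 / 2) * killingForm ℝ L (b m.succ) (b m'.succ)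
        - (1 / 2) * ∑ i, metricForm b G (π ⁅b m.succ, X i⁆) (π ⁅b m'.succ, X i⁆)
        + (1 / 4) * ∑ i, ∑ j,
            metricForm b G (π ⁅X i, X j⁆) (b m.succ) * metricForm b G (π ⁅X i, X j⁆) (b m'.succ) =
      ricciCoord (fun k => pAdMatrix b (b k.succ))
        (of fun k l => killingForm ℝ L (b k.succ) (b l.succ)) G Q m m' := by
  have hP : (coordMatrix b X)ᵀ * G * coordMatrix b X = 1 := by
    ext i j
    rw [transpose_coordMatrix_mul_mul_apply, hXon, one_apply]
  have hQ := mul_transpose_eq_of_transpose_mul_mul_eq_one hP hGQ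
  simp only [hπ, metricForm_sub_smul_basis_zero_left, metricForm_sub_smul_basis_zero_right]
  rw [sum_metricForm_lie_lie b G hX0, sum_metricForm_lie_mul b G hX0, hQ,
    pBracketMatrix_basis_succ, pBracketMatrix_basis_succ]
  rfl

end RicciCoord

section So3Semidirect

/-- The bracket table of `𝔰𝔬(3) ⋉ ℝ³` in the basis `(E, c₃, c₁, c₂, F, G)`. -/
def so3SemidirectBracket {L : Type*} [Zero L] [Neg L] (e : Fin 6 → L) : Fin 6 → Fin 6 → L :=
  ![![0, 0, -e 3, e 2, -e 5, e 4],
    ![0, 0, 0, 0, -e 2, -e 3],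
    ![e 3, 0, 0, 0, e 1, 0],
    ![-e 2, 0, 0, 0, 0, e 1],
    ![e 5, e 2, -e 1, 0, 0, -e 0],
    ![-e 4, e 3, 0, -e 1, e 0, 0]]

def so3SemidirectAdP : Fin 5 → Matrix (Fin 5) (Fin 5) ℝ :=
  ![!![0, 0, 0, 0, 0; 0, 0, 0, -1, 0; 0, 0, 0, 0, -1; 0, 0, 0, 0, 0; 0, 0, 0, 0, 0],
    !![0, 0, 0, 1, 0; 0, 0, 0, 0, 0; 0, 0, 0, 0, 0; 0, 0, 0, 0, 0; 0, 0, 0, 0, 0],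
    !![0, 0, 0, 0, 1; 0, 0, 0, 0, 0; 0, 0, 0, 0, 0; 0, 0, 0, 0, 0; 0, 0, 0, 0, 0],
    !![0, -1, 0, 0, 0; 1, 0, 0, 0, 0; 0, 0, 0, 0, 0; 0, 0, 0, 0, 0; 0, 0, 0, 0, 0],
    !![0, 0, -1, 0, 0; 0, 0, 0, 0, 0; 1, 0, 0, 0, 0; 0, 0, 0, 0, 0; 0, 0, 0, 0, 0]]

def so3SemidirectKilling : Matrix (Fin 5) (Fin 5) ℝ :=
  diagonal ![0, 0, 0, -4, -4]

variable {L : Type*} [LieRing L] [LieAlgebra ℝ L] {b : Module.Basis (Fin 6) ℝ L}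

theorem pAdMatrix_so3Semidirect (hbr : ∀ i j, ⁅b i, b j⁆ = so3SemidirectBracket b i j) :
    (fun k : Fin 5 => pAdMatrix b (b k.succ)) = so3SemidirectAdP := by
  funext m
  ext k l
  fin_cases m <;> fin_cases k <;> fin_cases l <;>
    simp [pAdMatrix, hbr, so3SemidirectBracket, so3SemidirectAdP]

theorem killingForm_so3Semidirect (hbr : ∀ i j, ⁅b i, b j⁆ = so3SemidirectBracket b i j) :
    (of fun k l : Fin 5 => killingForm ℝ L (b k.succ) (b l.succ)) = so3SemidirectKilling := by
  ext k l
  fin_cases k <;> fin_cases l <;>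
    simp [killingForm_apply_eq_sum_repr b, Fin.sum_univ_six, hbr, so3SemidirectBracket,
      so3SemidirectKilling] <;> norm_num

end So3Semidirect

def metricMatrixInv (α β γ μ ν : ℝ) : Matrix (Fin 5) (Fin 5) ℝ :=
  let d := β * γ - (μ ^ 2 + ν ^ 2)
  !![1 / α, 0, 0, 0, 0;
     0, γ / d, 0, -μ / d, -ν / d;
     0, 0, γ / d, ν / d, -μ / d;
     0, -μ / d, ν / d, β / d, 0;
     0, -ν / d, -μ / d, 0, β / d]

theorem metricMatrix_mul_metricMatrixInv {α β γ μ ν : ℝ} (hα : α ≠ 0)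
    (hd : β * γ - (μ ^ 2 + ν ^ 2) ≠ 0) :
    metricMatrix α β γ μ ν * metricMatrixInv α β γ μ ν = 1 := by
  ext i j
  fin_cases i <;> fin_cases j <;>
    simp [metricMatrix, metricMatrixInv, mul_apply, Fin.sum_univ_five] <;> field_simp <;> ring

theorem ricciCoord_so3Semidirect {α β γ μ ν : ℝ} (hα : α ≠ 0)
    (hd : β * γ - (μ ^ 2 + ν ^ 2) ≠ 0) :
    let R := ricciCoord so3SemidirectAdP so3SemidirectKilling (metricMatrix α β γ μ ν)
      (metricMatrixInv α β γ μ ν)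
    let d := β * γ - (μ ^ 2 + ν ^ 2)
    R 0 0 = (α ^ 2 - β ^ 2) / d + 2 * α ^ 2 * ν ^ 2 / d ^ 2 ∧
    R 1 1 = β / (2 * α) * ((β ^ 2 - α ^ 2) / d) ∧
    R 2 2 = β / (2 * α) * ((β ^ 2 - α ^ 2) / d) ∧
    R 3 3 = 2 - β / α + γ / (2 * α) * ((β ^ 2 - α ^ 2) / d) ∧
    R 4 4 = 2 - β / α + γ / (2 * α) * ((β ^ 2 - α ^ 2) / d) ∧
    R 1 3 = μ * (β ^ 2 - α ^ 2) / (2 * α * d) ∧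
    R 2 4 = μ * (β ^ 2 - α ^ 2) / (2 * α * d) ∧
    R 1 4 = ν * (α ^ 2 + β ^ 2) / (2 * α * d) ∧
    R 2 3 = -(ν * (α ^ 2 + β ^ 2) / (2 * α * d)) := by
  intro R d
  refine ⟨?_, ?_, ?_, ?_, ?_, ?_, ?_, ?_, ?_⟩ <;>
  · simp [R, d, ricciCoord, bracketPairing, so3SemidirectAdP, so3SemidirectKilling, metricMatrix,
      metricMatrixInv, trace, mul_apply, Fin.sum_univ_five]
    field_simp
    ring

end

theorem ricci_tensor_so3_semidirect_R3_general
    (L : Type) [LieRing L] [LieAlgebra ℝ L]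
    (b : Module.Basis (Fin 6) ℝ L)
    (hbr : ∀ i j : Fin 6, ⁅b i, b j⁆ =
      ![![(0 : L), 0, -b 3, b 2, -b 5, b 4],
        ![0, 0, 0, 0, -b 2, -b 3],
        ![b 3, 0, 0, 0, b 1, 0],
        ![-b 2, 0, 0, 0, 0, b 1],
        ![b 5, b 2, -b 1, 0, 0, -b 0],
        ![-b 4, b 3, 0, -b 1, b 0, 0]] i j)
    (α β γ μ ν τ : ℝ) (hα : 0 < α)
    (hτ : τ = μ ^ 2 + ν ^ 2) (hpd : τ < β * γ)
    (ip : L → L → ℝ)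
    (hip : ip = fun u w => dotProduct (fun i : Fin 5 => b.repr u i.succ)
      ((metricMatrix α β γ μ ν).mulVec (fun i : Fin 5 => b.repr w i.succ)))
    (π : L → L)
    (hπ : ∀ z : L, π z = z - b.repr z 0 • b 0)
    (X : Fin 5 → L)
    (hX0 : ∀ i, b.repr (X i) 0 = 0)
    (hXon : ∀ i j, ip (X i) (X j) = if i = j then 1 else 0)
    (Ric : L → L → ℝ)
    (hRic : Ric = fun Y Z =>
      -(1 / 2) * killingForm ℝ L Y Z
        - (1 / 2) * ∑ i : Fin 5, ip (π ⁅Y, X i⁆) (π ⁅Z, X i⁆)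
        + (1 / 4) * ∑ i : Fin 5, ∑ j : Fin 5,
            ip (π ⁅X i, X j⁆) Y * ip (π ⁅X i, X j⁆) Z) :
    Ric (b 1) (b 1) =
        (α ^ 2 - β ^ 2) / (β * γ - τ) + 2 * α ^ 2 * ν ^ 2 / (β * γ - τ) ^ 2 ∧
    Ric (b 2) (b 2) = β / (2 * α) * ((β ^ 2 - α ^ 2) / (β * γ - τ)) ∧
    Ric (b 3) (b 3) = β / (2 * α) * ((β ^ 2 - α ^ 2) / (β * γ - τ)) ∧
    Ric (b 4) (b 4) = 2 - β / α + γ / (2 * α) * ((β ^ 2 - α ^ 2) / (β * γ - τ)) ∧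
    Ric (b 5) (b 5) = 2 - β / α + γ / (2 * α) * ((β ^ 2 - α ^ 2) / (β * γ - τ)) ∧
    Ric (b 2) (b 4) = μ * (β ^ 2 - α ^ 2) / (2 * α * (β * γ - τ)) ∧
    Ric (b 3) (b 5) = μ * (β ^ 2 - α ^ 2) / (2 * α * (β * γ - τ)) ∧
    Ric (b 2) (b 5) = ν * (α ^ 2 + β ^ 2) / (2 * α * (β * γ - τ)) ∧
    Ric (b 3) (b 4) = -(ν * (α ^ 2 + β ^ 2) / (2 * α * (β * γ - τ))) := by
  subst hτ hip hRic
  have hd : β * γ - (μ ^ 2 + ν ^ 2) ≠ 0 := (sub_pos.mpr hpd).ne'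
  have hRic := besse_ricci_basis_succ_eq_ricciCoord b
    (metricMatrix_mul_metricMatrixInv hα.ne' hd) hπ hX0 hXon
  rw [pAdMatrix_so3Semidirect hbr, killingForm_so3Semidirect hbr] at hRic
  obtain ⟨h00, h11, h22, h33, h44, h13, h24, h14, h23⟩ := ricciCoord_so3Semidirect hα.ne' hd
  exact ⟨(hRic 0 0).trans h00, (hRic 1 1).trans h11, (hRic 2 2).trans h22,
    (hRic 3 3).trans h33, (hRic 4 4).trans h44, (hRic 1 3).trans h13, (hRic 2 4).trans h24,
    (hRic 1 4).trans h14, (hRic 2 3).trans h23⟩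

/-- Besse's formula for the Ricci tensor of a homogeneous metric, applied to
`SO(3) ⋉ ℝ³ / SO(2)`.  Here `L = 𝔰𝔬(3) ⋉ ℝ³` with basis
`b 0 = E, b 1 = c₃, b 2 = c₁, b 3 = c₂, b 4 = F, b 5 = G` and the indicated bracket
table, `p = span(c₃,c₁,c₂,F,G)`, `π` is the projection onto `p` along `span(E)`,
`ip` is the inner product on `p` with matrix `g(α,β,γ,μ,ν)` (with `βγ > τ := μ²+ν²`)
in the basis `(c₃,c₁,c₂,F,G)`, `(X i)` is any `ip`-orthonormal basis of `p`, and
`Ric(Y,Z) = −(1/2)B(Y,Z) − (1/2)∑ᵢ ⟨π[Y,Xᵢ], π[Z,Xᵢ]⟩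
  + (1/4)∑ᵢⱼ ⟨π[Xᵢ,Xⱼ],Y⟩·⟨π[Xᵢ,Xⱼ],Z⟩` with `B` the Killing form of `L`.
The conclusion lists the entries of the Ricci tensor. -/
theorem ricci_tensor_so3_semidirect_R3
    (L : Type) [LieRing L] [LieAlgebra ℝ L] [Module.Finite ℝ L]
    (b : Module.Basis (Fin 6) ℝ L)
    (hbr : ∀ i j : Fin 6, ⁅b i, b j⁆ =
      ![![(0 : L), 0, -b 3, b 2, -b 5, b 4],
        ![0, 0, 0, 0, -b 2, -b 3],
        ![b 3, 0, 0, 0, b 1, 0],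
        ![-b 2, 0, 0, 0, 0, b 1],
        ![b 5, b 2, -b 1, 0, 0, -b 0],
        ![-b 4, b 3, 0, -b 1, b 0, 0]] i j)
    (α β γ μ ν τ : ℝ) (hα : 0 < α) (hβ : 0 < β) (hγ : 0 < γ)
    (hτ : τ = μ ^ 2 + ν ^ 2) (hpd : τ < β * γ)
    (ip : L → L → ℝ)
    (hip : ip = fun u w => dotProduct (fun i : Fin 5 => b.repr u i.succ)
      ((metricMatrix α β γ μ ν).mulVec (fun i : Fin 5 => b.repr w i.succ)))
    (π : L → L)
    (hπ : ∀ z : L, π z = z - b.repr z 0 • b 0)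
    (X : Fin 5 → L)
    (hX0 : ∀ i, b.repr (X i) 0 = 0)
    (hXspan : Submodule.span ℝ (Set.range X) =
      Submodule.span ℝ (Set.range fun i : Fin 5 => b i.succ))
    (hXon : ∀ i j, ip (X i) (X j) = if i = j then 1 else 0)
    (Ric : L → L → ℝ)
    (hRic : Ric = fun Y Z =>
      -(1 / 2) * killingForm ℝ L Y Z
        - (1 / 2) * ∑ i : Fin 5, ip (π ⁅Y, X i⁆) (π ⁅Z, X i⁆)
        + (1 / 4) * ∑ i : Fin 5, ∑ j : Fin 5,
            ip (π ⁅X i, X j⁆) Y * ip (π ⁅X i, X j⁆) Z) :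
    Ric (b 1) (b 1) =
        (α ^ 2 - β ^ 2) / (β * γ - τ) + 2 * α ^ 2 * ν ^ 2 / (β * γ - τ) ^ 2 ∧
    Ric (b 2) (b 2) = β / (2 * α) * ((β ^ 2 - α ^ 2) / (β * γ - τ)) ∧
    Ric (b 3) (b 3) = β / (2 * α) * ((β ^ 2 - α ^ 2) / (β * γ - τ)) ∧
    Ric (b 4) (b 4) = 2 - β / α + γ / (2 * α) * ((β ^ 2 - α ^ 2) / (β * γ - τ)) ∧
    Ric (b 5) (b 5) = 2 - β / α + γ / (2 * α) * ((β ^ 2 - α ^ 2) / (β * γ - τ)) ∧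
    Ric (b 2) (b 4) = μ * (β ^ 2 - α ^ 2) / (2 * α * (β * γ - τ)) ∧
    Ric (b 3) (b 5) = μ * (β ^ 2 - α ^ 2) / (2 * α * (β * γ - τ)) ∧
    Ric (b 2) (b 5) = ν * (α ^ 2 + β ^ 2) / (2 * α * (β * γ - τ)) ∧
    Ric (b 3) (b 4) = -(ν * (α ^ 2 + β ^ 2) / (2 * α * (β * γ - τ))) :=
  ricci_tensor_so3_semidirect_R3_general L b hbr α β γ μ ν τ hα hτ hpd ip hip π hπ X hX0 hXon Ric
    hRic
end
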